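/- arXiv:1801.01460 — 12 statements merged into one kernel-verified Lean document; each statement's English description precedes it below -/
import Mathlib

section
/- Let p : ℂ → ℂ be a polynomial, let J ⊆ ℂ be a nonempty compact set with p(J) ⊆ J, let z₀ ∈ J, and let (a,b,c) ∈ ℂ³. Consider the skew product F(z,w) = (p(z), w² + a z² + b z + c). If the forward orbit {Fⁿ(z₀,0) : n ∈ ℕ} is a bounded subset of ℂ², then |a z₀² + b z₀ + c| ≤ 2 √( sup_{z ∈ J} |a z² + b z + c| ). -/
/-!
Write `q(z) = a z² + b z + c`, `M = sup_J |q|` and `w_n` for the second coordinate of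
`Fⁿ(z₀, 0)`. Since the first coordinates stay in `J`, `|w_{n+1}| ≥ |w_n|² - M`, and
`w_1 = q(z₀)`. If `|q(z₀)| > 2√M`, then (as also `|q(z₀)| ≤ M`) `M > 4` and
`|w_1|² - |w_1| > M`, so `|w_n|` increases by a fixed positive amount at each step
and the orbit escapes.
-/

theorem norm_sq_sub_norm_le_norm_sq_add {α : Type*} [SeminormedRing α] [NormOneClass α]
    [NormMulClass α] (x y : α) : ‖x‖ ^ 2 - ‖y‖ ≤ ‖x ^ 2 + y‖ := by
  have h := norm_sub_norm_le (x ^ 2) (-y)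
  rw [sub_neg_eq_add, norm_neg, norm_pow] at h
  exact h

/-- Past the larger fixed point of `x ↦ x² - M` each step gains at least `s 0 ^ 2 - s 0 - M > 0`,
since `x ↦ x² - x` is increasing on `[1/2, ∞)`. -/
theorem not_bddAbove_range_of_sq_sub_le {s : ℕ → ℝ} {M : ℝ} (hs : ∀ n, s n ^ 2 - M ≤ s (n + 1))
    (h₁ : 1 ≤ s 0) (hM : M < s 0 ^ 2 - s 0) : ¬BddAbove (Set.range s) := by
  set δ := s 0 ^ 2 - s 0 - M
  have hgrowth : ∀ n : ℕ, s 0 + n * δ ≤ s n := by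
    intro n
    induction n with
    | zero => simp
    | succ n ih =>
      have hδn : 0 ≤ n * δ := by positivity
      push_cast
      nlinarith [hs n]
  rintro ⟨C, hC⟩
  obtain ⟨n, hn⟩ := exists_lt_nsmul (show 0 < δ by linarith) (C - s 0)
  rw [nsmul_eq_mul] at hn
  linarith [hC ⟨n, rfl⟩, hgrowth n]

theorem one_le_and_lt_sq_sub_of_two_sqrt_lt {M r : ℝ} (hrM : r ≤ M) (hr : 2 * √M < r) :
    1 ≤ r ∧ M < r ^ 2 - r := by
  have hM : 0 ≤ M := by
    by_contra! h
    rw [Real.sqrt_eq_zero_of_nonpos h.le] at hr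
    linarith
  have hsq := Real.sq_sqrt hM
  have hsqrt : 2 < √M := by nlinarith [Real.sqrt_nonneg M]
  constructor <;> nlinarith [Real.sqrt_nonneg M]

section SkewProduct

variable {X 𝕜 : Type*} [SeminormedRing 𝕜]
  {f : X → X} {q : X → 𝕜} {F : X × 𝕜 → X × 𝕜}

theorem iterate_skewProduct_succ (hF : ∀ x, F x = (f x.1, x.2 ^ 2 + q x.1)) (x : X × 𝕜) (n : ℕ) :
    F^[n + 1] x = (f (F^[n] x).1, (F^[n] x).2 ^ 2 + q (F^[n] x).1) := by
  rw [Function.iterate_succ_apply', hF]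

theorem fst_iterate_skewProduct_mem {J : Set X} (hJ : Set.MapsTo f J J)
    (hF : ∀ x, F x = (f x.1, x.2 ^ 2 + q x.1)) {x : X × 𝕜} (hx : x.1 ∈ J) (n : ℕ) :
    (F^[n] x).1 ∈ J := by
  induction n with
  | zero => exact hx
  | succ n ih => rw [iterate_skewProduct_succ hF]; exact hJ ih

theorem norm_snd_iterate_skewProduct_succ_ge [NormOneClass 𝕜] [NormMulClass 𝕜] {J : Set X}
    {M : ℝ} (hJ : Set.MapsTo f J J) (hq : ∀ z ∈ J, ‖q z‖ ≤ M) (hF : ∀ x, F x = (f x.1, x.2 ^ 2 + q x.1)) {x : X × 𝕜}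
    (hx : x.1 ∈ J) (n : ℕ) : ‖(F^[n] x).2‖ ^ 2 - M ≤ ‖(F^[n + 1] x).2‖ := by
  rw [iterate_skewProduct_succ hF]
  linarith [norm_sq_sub_norm_le_norm_sq_add (F^[n] x).2 (q (F^[n] x).1),
    hq _ (fst_iterate_skewProduct_mem hJ hF hx n)]

end SkewProduct

theorem bounded_critical_orbit_estimate_general
    (p : Polynomial ℂ) (J : Set ℂ) (hJc : IsCompact J)
    (hJinv : ∀ z ∈ J, p.eval z ∈ J) (z₀ : ℂ) (hz₀ : z₀ ∈ J) (a b c : ℂ)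
    (F : ℂ × ℂ → ℂ × ℂ)
    (hF : ∀ q : ℂ × ℂ, F q = (p.eval q.1, q.2 ^ 2 + a * q.1 ^ 2 + b * q.1 + c))
    (hbdd : Bornology.IsBounded (Set.range fun n => F^[n] (z₀, 0))) :
    ‖a * z₀ ^ 2 + b * z₀ + c‖ ≤
      2 * Real.sqrt (sSup ((fun z => ‖a * z ^ 2 + b * z + c‖) '' J)) := by
  set Q : ℂ → ℂ := fun z => a * z ^ 2 + b * z + c
  set M := sSup ((fun z => ‖Q z‖) '' J)
  have hF' : ∀ x, F x = (p.eval x.1, x.2 ^ 2 + Q x.1) := fun x => by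
    simp only [hF, Q, Prod.mk.injEq, true_and]; ring
  have hQM : ∀ z ∈ J, ‖Q z‖ ≤ M := fun z hz =>
    le_csSup (hJc.bddAbove_image (by fun_prop)) ⟨z, hz, rfl⟩
  by_contra! hlt
  obtain ⟨h₁, hM⟩ := one_le_and_lt_sq_sub_of_two_sqrt_lt (hQM z₀ hz₀) hlt
  have hfirst : ‖(F^[0 + 1] (z₀, 0)).2‖ = ‖Q z₀‖ := by simp [hF']
  refine not_bddAbove_range_of_sq_sub_le (s := fun n => ‖(F^[n + 1] (z₀, 0)).2‖)
    (fun n => norm_snd_iterate_skewProduct_succ_ge hJinv hQM hF' hz₀ (n + 1))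
    (hfirst ▸ h₁) (hfirst ▸ hM) ?_
  obtain ⟨C, hC⟩ := isBounded_iff_forall_norm_le.mp hbdd
  exact ⟨C, by rintro _ ⟨n, rfl⟩; exact (norm_snd_le _).trans (hC _ ⟨n + 1, rfl⟩)⟩

/-- If the vertical critical point `(z₀, 0)` over a point `z₀` of a compact `p`-invariant
set `J` has bounded orbit under the quadratic skew product
`F(z,w) = (p(z), w² + a z² + b z + c)`, then
`|a z₀² + b z₀ + c| ≤ 2 √(sup_{z ∈ J} |a z² + b z + c|)`. -/
theorem bounded_critical_orbit_estimate
    (p : Polynomial ℂ) (J : Set ℂ) (hJne : J.Nonempty) (hJc : IsCompact J)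
    (hJinv : ∀ z ∈ J, p.eval z ∈ J) (z₀ : ℂ) (hz₀ : z₀ ∈ J) (a b c : ℂ)
    (F : ℂ × ℂ → ℂ × ℂ)
    (hF : ∀ q : ℂ × ℂ, F q = (p.eval q.1, q.2 ^ 2 + a * q.1 ^ 2 + b * q.1 + c))
    (hbdd : Bornology.IsBounded (Set.range fun n => F^[n] (z₀, 0))) :
    ‖a * z₀ ^ 2 + b * z₀ + c‖ ≤
      2 * Real.sqrt (sSup ((fun z => ‖a * z ^ 2 + b * z + c‖) '' J)) :=
  bounded_critical_orbit_estimate_general p J hJc hJinv z₀ hz₀ a b c F hF hbdd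
end

section
/- Let p : ℂ → ℂ be a polynomial, J ⊆ ℂ a compact set with p(J) ⊆ J, and z₁, z₂, z₃ ∈ J three pairwise distinct points. Then the set of parameters (a,b,c) ∈ ℂ³ such that, for the skew product F_{a,b,c}(z,w) = (p(z), w² + a z² + b z + c), the forward orbits of all three points (z₁,0), (z₂,0), (z₃,0) under F_{a,b,c} are bounded subsets of ℂ², is a bounded subset of ℂ³. -/
set_option maxHeartbeats 1000000

private lemma escape_aux (M : ℝ) (hM : 0 ≤ M) (w g : ℕ → ℂ)
    (hg : ∀ n, ‖g n‖ ≤ M)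
    (hrec : ∀ n, w (n+1) = (w n)^2 + g n)
    (h0 : Real.sqrt M + 2 ≤ ‖w 0‖) :
    ∀ k : ℕ, Real.sqrt M + 2 + k ≤ ‖w k‖ := by
  intro k
  induction k with
  | zero => simpa using h0
  | succ k ih =>
    have h1 : ‖(w k)^2‖ ≤ ‖w (k+1)‖ + ‖g k‖ := by
      calc ‖(w k)^2‖ = ‖(w (k+1)) + (- g k)‖ := by rw [hrec k]; ring_nf
        _ ≤ ‖w (k+1)‖ + ‖-g k‖ := norm_add_le _ _
        _ = ‖w (k+1)‖ + ‖g k‖ := by rw [norm_neg]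
    have h2 : ‖(w k)^2‖ = ‖w k‖^2 := norm_pow _ 2
    have h3 := hg k
    have h4 := Real.sq_sqrt hM
    have h5 := Real.sqrt_nonneg M
    have h6 : (0:ℝ) ≤ (k:ℝ) := Nat.cast_nonneg k
    have hk1 : ((k+1 : ℕ) : ℝ) = (k:ℝ) + 1 := by push_cast; ring
    rw [hk1]
    nlinarith [sq_nonneg (‖w k‖ - (Real.sqrt M + 2 + k))]

/-- For three pairwise distinct points `z₁, z₂, z₃` of a compact `p`-invariant set `J`,
the set of parameters `(a,b,c) ∈ ℂ³` for which the orbits of `(z₁,0)`, `(z₂,0)`, `(z₃,0)`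
under `F_{a,b,c}(z,w) = (p(z), w² + a z² + b z + c)` are all bounded, is bounded in `ℂ³`. -/
theorem triple_boundedness_locus_bounded
    (p : Polynomial ℂ) (J : Set ℂ) (hJc : IsCompact J)
    (hJinv : ∀ z ∈ J, p.eval z ∈ J)
    (z₁ z₂ z₃ : ℂ) (hz₁ : z₁ ∈ J) (hz₂ : z₂ ∈ J) (hz₃ : z₃ ∈ J)
    (h12 : z₁ ≠ z₂) (h13 : z₁ ≠ z₃) (h23 : z₂ ≠ z₃) :
    Bornology.IsBounded
      {abc : ℂ × ℂ × ℂ | ∀ z ∈ ({z₁, z₂, z₃} : Set ℂ),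
        Bornology.IsBounded (Set.range fun n =>
          (fun q : ℂ × ℂ =>
            (p.eval q.1, q.2 ^ 2 + abc.1 * q.1 ^ 2 + abc.2.1 * q.1 + abc.2.2))^[n]
            (z, 0))} := by
  -- radius of a ball containing J
  obtain ⟨r₀, hr₀⟩ := hJc.isBounded.subset_closedBall 0
  obtain ⟨r, hr_def⟩ : ∃ x : ℝ, x = max r₀ 1 := ⟨_, rfl⟩
  have hr1 : (1:ℝ) ≤ r := by rw [hr_def]; exact le_max_right _ _
  have hr0 : (0:ℝ) ≤ r := le_trans zero_le_one hr1
  have hr : ∀ ζ ∈ J, ‖ζ‖ ≤ r := by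
    intro ζ hζ
    have := hr₀ hζ
    rw [Metric.mem_closedBall, dist_zero_right] at this
    exact this.trans (by rw [hr_def]; exact le_max_left _ _)
  -- separation of the marked points
  obtain ⟨d12, hd12_def⟩ : ∃ x : ℝ, x = ‖z₁ - z₂‖ := ⟨_, rfl⟩
  obtain ⟨d13, hd13_def⟩ : ∃ x : ℝ, x = ‖z₁ - z₃‖ := ⟨_, rfl⟩
  obtain ⟨d23, hd23_def⟩ : ∃ x : ℝ, x = ‖z₂ - z₃‖ := ⟨_, rfl⟩
  have hd12 : 0 < d12 := by rw [hd12_def]; simpa [sub_eq_zero] using h12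
  have hd13 : 0 < d13 := by rw [hd13_def]; simpa [sub_eq_zero] using h13
  have hd23 : 0 < d23 := by rw [hd23_def]; simpa [sub_eq_zero] using h23
  obtain ⟨Ka, hKa_def⟩ : ∃ x : ℝ, x = 8 * r / (d12 * (d13 * d23)) := ⟨_, rfl⟩
  obtain ⟨Kb, hKb_def⟩ : ∃ x : ℝ, x = (2 + 2 * r^2 * Ka) / d12 := ⟨_, rfl⟩
  obtain ⟨Kc, hKc_def⟩ : ∃ x : ℝ, x = 1 + r^2 * Ka + r * Kb := ⟨_, rfl⟩
  obtain ⟨K, hK_def⟩ : ∃ x : ℝ, x = Ka + Kb + Kc := ⟨_, rfl⟩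
  have hKa0 : 0 < Ka := by
    rw [hKa_def]
    apply div_pos (by linarith) (by positivity)
  have hKb0 : 0 < Kb := by
    rw [hKb_def]
    apply div_pos (by nlinarith) hd12
  have hKc0 : 0 < Kc := by rw [hKc_def]; nlinarith
  have hK0 : 0 < K := by rw [hK_def]; linarith
  obtain ⟨R, hR_def⟩ : ∃ x : ℝ, x = (K * r + 2 * K + 1)^2 := ⟨_, rfl⟩
  apply (Metric.isBounded_closedBall (x := (0 : ℂ × ℂ × ℂ)) (r := R)).subset
  rintro ⟨a, b, c⟩ habc
  simp only [Set.mem_setOf_eq] at habc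
  rw [Metric.mem_closedBall, dist_zero_right]
  obtain ⟨S, hS_def⟩ : ∃ x : ℝ, x = ‖a‖ + ‖b‖ + ‖c‖ := ⟨_, rfl⟩
  have hS0 : (0:ℝ) ≤ S := by rw [hS_def]; positivity
  obtain ⟨M, hM_def⟩ : ∃ x : ℝ, x = S * r^2 := ⟨_, rfl⟩
  have hM0 : (0:ℝ) ≤ M := by rw [hM_def]; positivity
  have hMbound : ∀ ζ ∈ J, ‖a * ζ^2 + b * ζ + c‖ ≤ M := by
    intro ζ hζ
    have hζr := hr ζ hζ
    have hζ0 : (0:ℝ) ≤ ‖ζ‖ := norm_nonneg _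
    calc ‖a * ζ^2 + b * ζ + c‖ ≤ ‖a * ζ^2 + b * ζ‖ + ‖c‖ := norm_add_le _ _
      _ ≤ ‖a * ζ^2‖ + ‖b * ζ‖ + ‖c‖ := by linarith [norm_add_le (a * ζ^2) (b * ζ)]
      _ = ‖a‖ * ‖ζ‖^2 + ‖b‖ * ‖ζ‖ + ‖c‖ := by rw [norm_mul, norm_mul, norm_pow]
      _ ≤ ‖a‖ * r^2 + ‖b‖ * r^2 + ‖c‖ * r^2 := by
          have h1 : ‖ζ‖^2 ≤ r^2 := by nlinarith
          have h2 : ‖ζ‖ ≤ r^2 := by nlinarith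
          have h3 : (1:ℝ) ≤ r^2 := by nlinarith
          nlinarith [norm_nonneg a, norm_nonneg b, norm_nonneg c]
      _ = M := by rw [hM_def, hS_def]; ring
  obtain ⟨V, hV_def⟩ : ∃ x : ℝ, x = Real.sqrt M + 2 := ⟨_, rfl⟩
  have hV0 : (0:ℝ) ≤ V := by rw [hV_def]; positivity
  -- key lemma: bounded orbit forces small q-value
  have key : ∀ z ∈ J, Bornology.IsBounded (Set.range fun n =>
      (fun q : ℂ × ℂ =>
        (p.eval q.1, q.2 ^ 2 + a * q.1 ^ 2 + b * q.1 + c))^[n] (z, 0)) →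
      ‖a * z^2 + b * z + c‖ ≤ V := by
    intro z hz hb
    set F : ℂ × ℂ → ℂ × ℂ := fun q =>
      (p.eval q.1, q.2 ^ 2 + a * q.1 ^ 2 + b * q.1 + c) with hF_def
    have hfst : ∀ n : ℕ, (F^[n] (z, 0)).1 ∈ J := by
      intro n
      induction n with
      | zero => simpa using hz
      | succ n ih =>
        rw [Function.iterate_succ_apply']
        exact hJinv _ ih
    by_contra hcon
    push_neg at hcon
    set w : ℕ → ℂ := fun n => (F^[n+1] (z, 0)).2 with hw_def
    set g : ℕ → ℂ := fun n =>
      a * ((F^[n+1] (z, 0)).1)^2 + b * ((F^[n+1] (z, 0)).1) + c with hg_def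
    have hg : ∀ n, ‖g n‖ ≤ M := fun n => hMbound _ (hfst (n+1))
    have hrec : ∀ n, w (n+1) = (w n)^2 + g n := by
      intro n
      show (F^[n+2] (z, 0)).2 = _
      rw [show n + 2 = (n+1) + 1 by ring, Function.iterate_succ_apply']
      simp only [hw_def, hg_def, hF_def]
      ring
    have hw0 : w 0 = a * z^2 + b * z + c := by
      show (F^[1] (z, 0)).2 = _
      simp [hF_def]
    have h0 : Real.sqrt M + 2 ≤ ‖w 0‖ := by
      rw [hw0, ← hV_def]; exact le_of_lt hcon
    have hesc := escape_aux M hM0 w g hg hrec h0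
    obtain ⟨C, hC⟩ := (isBounded_iff_forall_norm_le).mp hb
    obtain ⟨k, hk⟩ := exists_nat_gt C
    have h1 : ‖w k‖ ≤ C := by
      have h2 : ‖F^[k+1] (z, 0)‖ ≤ C := hC _ (Set.mem_range_self (k+1))
      exact le_trans (norm_snd_le _) h2
    have h3 := hesc k
    have h4 := Real.sqrt_nonneg M
    linarith
  have hv1 : ‖a * z₁^2 + b * z₁ + c‖ ≤ V := key z₁ hz₁ (habc z₁ (by simp))
  have hv2 : ‖a * z₂^2 + b * z₂ + c‖ ≤ V := key z₂ hz₂ (habc z₂ (by simp))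
  have hv3 : ‖a * z₃^2 + b * z₃ + c‖ ≤ V := key z₃ hz₃ (habc z₃ (by simp))
  have hz1r : ‖z₁‖ ≤ r := hr z₁ hz₁
  have hz2r : ‖z₂‖ ≤ r := hr z₂ hz₂
  have hz3r : ‖z₃‖ ≤ r := hr z₃ hz₃
  -- bound ‖a‖
  have ha : ‖a‖ ≤ Ka * V := by
    have heq : a * ((z₁ - z₂) * ((z₁ - z₃) * (z₂ - z₃)))
        = ((a * z₁^2 + b * z₁ + c) - (a * z₂^2 + b * z₂ + c)) * (z₁ - z₃)
          - ((a * z₁^2 + b * z₁ + c) - (a * z₃^2 + b * z₃ + c)) * (z₁ - z₂) := by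
      ring
    have hnorm : ‖a‖ * (d12 * (d13 * d23)) ≤ 8 * r * V := by
      calc ‖a‖ * (d12 * (d13 * d23))
          = ‖a * ((z₁ - z₂) * ((z₁ - z₃) * (z₂ - z₃)))‖ := by
            simp only [hd12_def, hd13_def, hd23_def, norm_mul]
        _ = ‖((a * z₁^2 + b * z₁ + c) - (a * z₂^2 + b * z₂ + c)) * (z₁ - z₃)
              - ((a * z₁^2 + b * z₁ + c) - (a * z₃^2 + b * z₃ + c)) * (z₁ - z₂)‖ := by
            rw [heq]
        _ ≤ ‖((a * z₁^2 + b * z₁ + c) - (a * z₂^2 + b * z₂ + c))‖ * ‖z₁ - z₃‖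
              + ‖((a * z₁^2 + b * z₁ + c) - (a * z₃^2 + b * z₃ + c))‖ * ‖z₁ - z₂‖ := by
            calc _ ≤ ‖_ * (z₁ - z₃)‖ + ‖_ * (z₁ - z₂)‖ := norm_sub_le _ _
              _ = _ := by rw [norm_mul, norm_mul]
        _ ≤ (2 * V) * (2 * r) + (2 * V) * (2 * r) := by
            have e1 : ‖(a * z₁^2 + b * z₁ + c) - (a * z₂^2 + b * z₂ + c)‖ ≤ 2 * V := by
              calc _ ≤ ‖a * z₁^2 + b * z₁ + c‖ + ‖a * z₂^2 + b * z₂ + c‖ := norm_sub_le _ _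
                _ ≤ 2 * V := by linarith
            have e2 : ‖(a * z₁^2 + b * z₁ + c) - (a * z₃^2 + b * z₃ + c)‖ ≤ 2 * V := by
              calc _ ≤ ‖a * z₁^2 + b * z₁ + c‖ + ‖a * z₃^2 + b * z₃ + c‖ := norm_sub_le _ _
                _ ≤ 2 * V := by linarith
            have e3 : ‖z₁ - z₃‖ ≤ 2 * r := by
              calc _ ≤ ‖z₁‖ + ‖z₃‖ := norm_sub_le _ _
                _ ≤ 2 * r := by linarith
            have e4 : ‖z₁ - z₂‖ ≤ 2 * r := by
              calc _ ≤ ‖z₁‖ + ‖z₂‖ := norm_sub_le _ _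
                _ ≤ 2 * r := by linarith
            have hn1 : (0:ℝ) ≤ ‖(a * z₁^2 + b * z₁ + c) - (a * z₂^2 + b * z₂ + c)‖ :=
              norm_nonneg _
            have hn2 : (0:ℝ) ≤ ‖(a * z₁^2 + b * z₁ + c) - (a * z₃^2 + b * z₃ + c)‖ :=
              norm_nonneg _
            nlinarith
        _ = 8 * r * V := by ring
    rw [hKa_def, div_mul_eq_mul_div, le_div_iff₀ (mul_pos hd12 (mul_pos hd13 hd23))]
    linarith [hnorm]
  -- bound ‖b‖
  have hb : ‖b‖ ≤ Kb * V := by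
    have heq : b * (z₁ - z₂)
        = ((a * z₁^2 + b * z₁ + c) - (a * z₂^2 + b * z₂ + c)) - a * (z₁^2 - z₂^2) := by
      ring
    have hnorm : ‖b‖ * d12 ≤ 2 * V + ‖a‖ * (2 * r^2) := by
      calc ‖b‖ * d12 = ‖b * (z₁ - z₂)‖ := by simp only [hd12_def, norm_mul]
        _ ≤ ‖(a * z₁^2 + b * z₁ + c) - (a * z₂^2 + b * z₂ + c)‖ + ‖a * (z₁^2 - z₂^2)‖ := by
            rw [heq]; exact norm_sub_le _ _
        _ ≤ 2 * V + ‖a‖ * (2 * r^2) := by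
            have e1 : ‖(a * z₁^2 + b * z₁ + c) - (a * z₂^2 + b * z₂ + c)‖ ≤ 2 * V := by
              calc _ ≤ ‖a * z₁^2 + b * z₁ + c‖ + ‖a * z₂^2 + b * z₂ + c‖ := norm_sub_le _ _
                _ ≤ 2 * V := by linarith
            have e2 : ‖z₁^2 - z₂^2‖ ≤ 2 * r^2 := by
              calc ‖z₁^2 - z₂^2‖ ≤ ‖z₁^2‖ + ‖z₂^2‖ := norm_sub_le _ _
                _ = ‖z₁‖^2 + ‖z₂‖^2 := by rw [norm_pow, norm_pow]
                _ ≤ 2 * r^2 := by nlinarith [norm_nonneg z₁, norm_nonneg z₂]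
            have := norm_mul a (z₁^2 - z₂^2)
            nlinarith [norm_nonneg a]
    rw [hKb_def, div_mul_eq_mul_div, le_div_iff₀ hd12]
    nlinarith [hKa0.le, hV0]
  -- bound ‖c‖
  have hc : ‖c‖ ≤ Kc * V := by
    have heq : c = (a * z₁^2 + b * z₁ + c) - a * z₁^2 - b * z₁ := by ring
    have hnorm : ‖c‖ ≤ V + ‖a‖ * r^2 + ‖b‖ * r := by
      calc ‖c‖ = ‖(a * z₁^2 + b * z₁ + c) - a * z₁^2 - b * z₁‖ := by rw [← heq]
        _ ≤ ‖(a * z₁^2 + b * z₁ + c) - a * z₁^2‖ + ‖b * z₁‖ := norm_sub_le _ _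
        _ ≤ ‖a * z₁^2 + b * z₁ + c‖ + ‖a * z₁^2‖ + ‖b * z₁‖ := by
            linarith [norm_sub_le (a * z₁^2 + b * z₁ + c) (a * z₁^2)]
        _ = ‖a * z₁^2 + b * z₁ + c‖ + ‖a‖ * ‖z₁‖^2 + ‖b‖ * ‖z₁‖ := by
            rw [norm_mul, norm_mul, norm_pow]
        _ ≤ V + ‖a‖ * r^2 + ‖b‖ * r := by
            have h1 : ‖z₁‖^2 ≤ r^2 := by nlinarith [norm_nonneg z₁]
            nlinarith [norm_nonneg a, norm_nonneg b, norm_nonneg z₁]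
    have t1 : ‖a‖ * r^2 ≤ Ka * V * r^2 := mul_le_mul_of_nonneg_right ha (by positivity)
    have t2 : ‖b‖ * r ≤ Kb * V * r := mul_le_mul_of_nonneg_right hb hr0
    have teq : Kc * V = V + Ka * V * r^2 + Kb * V * r := by rw [hKc_def]; ring
    linarith only [hnorm, t1, t2, teq]
  -- conclude S small
  have hSV : S ≤ K * V := by
    have teq : K * V = Ka * V + Kb * V + Kc * V := by rw [hK_def]; ring
    rw [hS_def]; linarith only [teq, ha, hb, hc]
  have hsqrtM : Real.sqrt M = Real.sqrt S * r := by
    rw [hM_def, Real.sqrt_mul hS0, Real.sqrt_sq hr0]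
  have hSle : S ≤ K * r * Real.sqrt S + 2 * K := by
    have teq : K * V = K * r * Real.sqrt S + 2 * K := by
      rw [hV_def, hsqrtM]; ring
    linarith only [teq, hSV]
  have hsS : Real.sqrt S ≤ K * r + 2 * K + 1 := by
    nlinarith [Real.sq_sqrt hS0, Real.sqrt_nonneg S, hK0, hr1]
  have hSR : S ≤ R := by
    rw [hR_def, ← Real.sq_sqrt hS0]
    exact pow_le_pow_left₀ (Real.sqrt_nonneg S) hsS 2
  have hnorm_le : ‖((a, b, c) : ℂ × ℂ × ℂ)‖ ≤ S := by
    have h1 : ‖((a, b, c) : ℂ × ℂ × ℂ)‖ = max ‖a‖ (max ‖b‖ ‖c‖) := rfl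
    rw [h1]
    have := norm_nonneg a; have := norm_nonneg b; have := norm_nonneg c
    simp only [max_le_iff]
    refine ⟨by linarith, by linarith, by linarith⟩
  linarith
end

section
/- Let p : ℂ → ℂ be a polynomial, J ⊆ ℂ a nonempty compact set with p(J) ⊆ J, and z₀ ∈ J. Let (a_n, b_n, c_n) ∈ ℂ³ be a sequence of parameters such that for each n the forward orbit of (z₀, 0) under F_n(z,w) = (p(z), w² + a_n z² + b_n z + c_n) is bounded in ℂ². If ‖(a_n,b_n,c_n)‖ → ∞ and (a_n,b_n,c_n)/‖(a_n,b_n,c_n)‖ → (a,b,c) (for the sup norm on ℂ³), then a z₀² + b z₀ + c = 0. -/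
/-- If a sequence of parameters `(aₙ,bₙ,cₙ)`, each lying in the boundedness locus `B_{z₀}`
(the orbit of `(z₀,0)` under `(z,w) ↦ (p(z), w² + aₙ z² + bₙ z + cₙ)` is bounded),
tends to infinity with normalized direction `(a,b,c)`, then `a z₀² + b z₀ + c = 0`. -/
theorem cluster_at_infinity_of_Bz
    (p : Polynomial ℂ) (J : Set ℂ) (hJne : J.Nonempty) (hJc : IsCompact J)
    (hJinv : ∀ z ∈ J, p.eval z ∈ J) (z₀ : ℂ) (hz₀ : z₀ ∈ J)
    (P : ℕ → ℂ × ℂ × ℂ)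
    (hbdd : ∀ n, Bornology.IsBounded (Set.range fun k =>
      (fun q : ℂ × ℂ =>
        (p.eval q.1, q.2 ^ 2 + (P n).1 * q.1 ^ 2 + (P n).2.1 * q.1 + (P n).2.2))^[k]
        (z₀, 0)))
    (hnorm : Filter.Tendsto (fun n => ‖P n‖) Filter.atTop Filter.atTop)
    (a b c : ℂ)
    (hdir : Filter.Tendsto (fun n => (‖P n‖)⁻¹ • P n) Filter.atTop (nhds (a, b, c))) :
    a * z₀ ^ 2 + b * z₀ + c = 0 := by
  by_contra hne
  set δ := ‖a * z₀ ^ 2 + b * z₀ + c‖ with hδ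
  have hδpos : 0 < δ := norm_pos_iff.mpr hne
  -- bound on J
  obtain ⟨r, hr⟩ := hJc.isBounded.subset_closedBall 0
  have hrz : ∀ z ∈ J, ‖z‖ ≤ r := by
    intro z hz
    simpa using hr hz
  have hr0 : 0 ≤ r := le_trans (norm_nonneg z₀) (hrz z₀ hz₀)
  set M : ℝ := r ^ 2 + r + 1 with hM
  have hM1 : 1 ≤ M := by nlinarith
  -- bound on q_n on J
  have hqbound : ∀ n, ∀ z ∈ J,
      ‖(P n).1 * z ^ 2 + (P n).2.1 * z + (P n).2.2‖ ≤ ‖P n‖ * M := by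
    intro n z hz
    have h1 : ‖(P n).1‖ ≤ ‖P n‖ := norm_fst_le _
    have h2 : ‖(P n).2.1‖ ≤ ‖P n‖ := le_trans (norm_fst_le _) (norm_snd_le _)
    have h3 : ‖(P n).2.2‖ ≤ ‖P n‖ := le_trans (norm_snd_le _) (norm_snd_le _)
    have hzr := hrz z hz
    have hz0 : (0:ℝ) ≤ ‖z‖ := norm_nonneg z
    have hPn0 : (0:ℝ) ≤ ‖P n‖ := norm_nonneg _
    have hz2 : ‖z‖ ^ 2 ≤ r ^ 2 := by nlinarith
    have e1 : ‖(P n).1‖ * ‖z‖ ^ 2 ≤ ‖P n‖ * r ^ 2 :=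
      mul_le_mul h1 hz2 (sq_nonneg _) hPn0
    have e2 : ‖(P n).2.1‖ * ‖z‖ ≤ ‖P n‖ * r := mul_le_mul h2 hzr hz0 hPn0
    calc ‖(P n).1 * z ^ 2 + (P n).2.1 * z + (P n).2.2‖
        ≤ ‖(P n).1 * z ^ 2 + (P n).2.1 * z‖ + ‖(P n).2.2‖ := norm_add_le _ _
      _ ≤ (‖(P n).1 * z ^ 2‖ + ‖(P n).2.1 * z‖) + ‖(P n).2.2‖ := by
          gcongr; exact norm_add_le _ _
      _ = ‖(P n).1‖ * ‖z‖ ^ 2 + ‖(P n).2.1‖ * ‖z‖ + ‖(P n).2.2‖ := by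
          simp [norm_mul, norm_pow]
      _ ≤ ‖P n‖ * M := by rw [hM]; linarith
  -- limit of normalized q_n(z₀)
  have hcont : Continuous (fun v : ℂ × ℂ × ℂ => v.1 * z₀ ^ 2 + v.2.1 * z₀ + v.2.2) := by
    fun_prop
  have hlim : Filter.Tendsto
      (fun n => (‖P n‖)⁻¹ • ((P n).1 * z₀ ^ 2 + (P n).2.1 * z₀ + (P n).2.2))
      Filter.atTop (nhds (a * z₀ ^ 2 + b * z₀ + c)) := by
    have := (hcont.tendsto (a, b, c)).comp hdir
    convert this using 2 with n
    simp only [Function.comp, Prod.smul_fst, Prod.smul_snd, smul_add,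
      Complex.real_smul]
    push_cast
    ring
  have hnlim : Filter.Tendsto
      (fun n => ‖(‖P n‖)⁻¹ • ((P n).1 * z₀ ^ 2 + (P n).2.1 * z₀ + (P n).2.2)‖)
      Filter.atTop (nhds δ) := hlim.norm
  -- choose n
  have hev1 : ∀ᶠ n in Filter.atTop,
      δ / 2 ≤ ‖(‖P n‖)⁻¹ • ((P n).1 * z₀ ^ 2 + (P n).2.1 * z₀ + (P n).2.2)‖ :=
    hnlim.eventually (eventually_ge_nhds (by linarith))
  have hev2 : ∀ᶠ n in Filter.atTop, max (8 * M / δ ^ 2) (max (8 / δ) 1) ≤ ‖P n‖ :=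
    hnorm.eventually_ge_atTop _
  obtain ⟨n, hn1, hn2⟩ := (hev1.and hev2).exists
  set R := ‖P n‖ with hR
  have hR1 : 1 ≤ R := le_trans (le_max_of_le_right (le_max_right _ _)) hn2
  have hR0 : 0 < R := lt_of_lt_of_le one_pos hR1
  set L : ℝ := δ / 2 * R with hL
  have hL4 : 4 ≤ L := by
    have h8 : 8 / δ ≤ R := le_trans (le_max_of_le_right (le_max_left _ _)) hn2
    have : 8 ≤ δ * R := by
      rw [div_le_iff₀ hδpos] at h8; linarith [h8]
    rw [hL]; linarith
  have hL2 : 2 * M * R ≤ L ^ 2 := by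
    have h8 : 8 * M / δ ^ 2 ≤ R := le_trans (le_max_left _ _) hn2
    have h8' : 8 * M ≤ δ ^ 2 * R := by
      rw [div_le_iff₀ (by positivity)] at h8; linarith [h8]
    rw [hL]
    nlinarith [h8', hR1, hδpos, hR0, mul_le_mul_of_nonneg_right h8' hR0.le]
  -- the starting norm bound
  have hstart : L ≤ ‖(P n).1 * z₀ ^ 2 + (P n).2.1 * z₀ + (P n).2.2‖ := by
    rw [norm_smul, Real.norm_eq_abs, abs_inv, abs_of_pos hR0] at hn1
    have h2 : δ / 2 * R ≤ R⁻¹ * ‖(P n).1 * z₀ ^ 2 + (P n).2.1 * z₀ + (P n).2.2‖ * R :=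
      mul_le_mul_of_nonneg_right hn1 hR0.le
    have h3 : R⁻¹ * ‖(P n).1 * z₀ ^ 2 + (P n).2.1 * z₀ + (P n).2.2‖ * R
        = ‖(P n).1 * z₀ ^ 2 + (P n).2.1 * z₀ + (P n).2.2‖ := by
      field_simp
    rw [h3] at h2
    rw [hL]; exact h2
  -- set up the orbit
  set F : ℂ × ℂ → ℂ × ℂ := fun q =>
    (p.eval q.1, q.2 ^ 2 + (P n).1 * q.1 ^ 2 + (P n).2.1 * q.1 + (P n).2.2) with hF
  set orb : ℕ → ℂ × ℂ := fun k => F^[k] (z₀, 0) with horb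
  have horbsucc : ∀ k, orb (k + 1) = F (orb k) := by
    intro k
    rw [horb]
    simp [Function.iterate_succ_apply']
  have hfst : ∀ k, (orb k).1 ∈ J := by
    intro k
    induction k with
    | zero => simpa [horb] using hz₀
    | succ k ih =>
      rw [horbsucc k, hF]
      exact hJinv _ ih
  -- growth claim
  have hgrow : ∀ k, 2 ^ k * L ≤ ‖(orb (k + 1)).2‖ := by
    intro k
    induction k with
    | zero =>
      have h1 : orb 1 = F (z₀, 0) := by rw [horbsucc 0]; simp [horb]
      rw [h1, hF]
      simpa [add_assoc] using hstart
    | succ k ih =>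
      have hwq : (orb (k + 2)).2 =
          (orb (k + 1)).2 ^ 2 + ((P n).1 * (orb (k + 1)).1 ^ 2
            + (P n).2.1 * (orb (k + 1)).1 + (P n).2.2) := by
        rw [horbsucc (k + 1), hF]; ring_nf
      have hq := hqbound n _ (hfst (k + 1))
      set w := (orb (k + 1)).2
      set q := (P n).1 * (orb (k + 1)).1 ^ 2 + (P n).2.1 * (orb (k + 1)).1 + (P n).2.2
        with hqdef
      have hlow : ‖w ^ 2‖ - ‖q‖ ≤ ‖(orb (k + 2)).2‖ := by
        have h := norm_add_le (w ^ 2 + q) (-q)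
        simp only [add_neg_cancel_right, norm_neg] at h
        rw [hwq]
        linarith
      have hw2 : ‖w‖ ^ 2 - M * R ≤ ‖(orb (k + 2)).2‖ := by
        rw [norm_pow] at hlow
        linarith [hq, hlow]
      have hpk : (1:ℝ) ≤ 2 ^ k := one_le_pow₀ (by norm_num)
      have hy0 : (0:ℝ) ≤ 2 ^ k * L := by positivity
      have hwL : L ≤ ‖w‖ := le_trans (le_mul_of_one_le_left (by linarith) hpk) ih
      have hLy : L ≤ 2 ^ k * L := le_mul_of_one_le_left (by linarith) hpk
      have h1 : ‖w‖ * (2 ^ k * L) ≤ ‖w‖ * ‖w‖ :=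
        mul_le_mul_of_nonneg_left ih (norm_nonneg w)
      have h2 : L * (2 ^ k * L) ≤ ‖w‖ * (2 ^ k * L) :=
        mul_le_mul_of_nonneg_right hwL hy0
      have h3 : L * L ≤ L * (2 ^ k * L) :=
        mul_le_mul_of_nonneg_left hLy (by linarith)
      have : 2 ^ (k + 1) * L ≤ ‖w‖ ^ 2 - M * R := by
        rw [pow_succ]
        nlinarith [h1, h2, h3, hL2, hL4, hy0]
      linarith
  -- contradiction with boundedness
  obtain ⟨C, hC⟩ := (isBounded_iff_forall_norm_le).mp (hbdd n)
  have hCk : ∀ k, ‖(orb (k + 1)).2‖ ≤ C := by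
    intro k
    have hmem : orb (k + 1) ∈ Set.range fun k =>
        (fun q : ℂ × ℂ =>
          (p.eval q.1, q.2 ^ 2 + (P n).1 * q.1 ^ 2 + (P n).2.1 * q.1 + (P n).2.2))^[k]
          (z₀, 0) := ⟨k + 1, rfl⟩
    exact le_trans (norm_snd_le _) (hC _ hmem)
  obtain ⟨k, hk⟩ := pow_unbounded_of_one_lt (C / L) (by norm_num : (1:ℝ) < 2)
  have hLpos : 0 < L := by linarith
  have hfin : C < 2 ^ k * L := by
    rw [div_lt_iff₀ hLpos] at hk
    linarith
  linarith [hgrow k, hCk k]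
end

section
/- Let p : ℂ → ℂ be a polynomial and J ⊆ ℂ a compact set containing at least three points with p(J) ⊆ J. Let (a_n, b_n, c_n) ∈ ℂ³ be a sequence of parameters such that for each n there exists z_n ∈ J for which the forward orbit of (z_n, 0) under F_n(z,w) = (p(z), w² + a_n z² + b_n z + c_n) is bounded in ℂ². If ‖(a_n,b_n,c_n)‖ → ∞ and (a_n,b_n,c_n)/‖(a_n,b_n,c_n)‖ → (a,b,c) (for the sup norm on ℂ³), then there exists z ∈ J with a z² + b z + c = 0. -/
/-- Bound for a quadratic with coefficient triple `v` on a disk of radius `K`. -/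
lemma quad_poly_bound (v : ℂ × ℂ × ℂ) (K : ℝ) (hK : 0 ≤ K) (z : ℂ) (hz : ‖z‖ ≤ K) :
    ‖v.1 * z ^ 2 + v.2.1 * z + v.2.2‖ ≤ ‖v‖ * (K ^ 2 + K + 1) := by
  have h1 : ‖v.1‖ ≤ ‖v‖ := norm_fst_le v
  have h2 : ‖v.2.1‖ ≤ ‖v‖ := le_trans (norm_fst_le v.2) (norm_snd_le v)
  have h3 : ‖v.2.2‖ ≤ ‖v‖ := le_trans (norm_snd_le v.2) (norm_snd_le v)
  have hz0 : 0 ≤ ‖z‖ := norm_nonneg z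
  have hA := norm_add_le (v.1 * z ^ 2 + v.2.1 * z) v.2.2
  have hB := norm_add_le (v.1 * z ^ 2) (v.2.1 * z)
  have hm1 : ‖v.1 * z ^ 2‖ = ‖v.1‖ * ‖z‖ ^ 2 := by rw [norm_mul, norm_pow]
  have hm2 : ‖v.2.1 * z‖ = ‖v.2.1‖ * ‖z‖ := norm_mul _ _
  have hv0 : 0 ≤ ‖v‖ := norm_nonneg v
  nlinarith [sq_nonneg ‖z‖, sq_nonneg (K - ‖z‖), mul_le_mul_of_nonneg_left hz hv0]

set_option maxHeartbeats 1200000 in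
/-- If a sequence of parameters `(aₙ,bₙ,cₙ)`, each lying in some boundedness locus `B_{zₙ}`
with `zₙ ∈ J`, tends to infinity with normalized direction `(a,b,c)`, then the quadratic
polynomial `a X² + b X + c` vanishes somewhere on `J`. -/
theorem cluster_at_infinity_of_union_Bz
    (p : Polynomial ℂ) (J : Set ℂ) (hJc : IsCompact J)
    (hJinv : ∀ z ∈ J, p.eval z ∈ J)
    (z₁ z₂ z₃ : ℂ) (hz₁ : z₁ ∈ J) (hz₂ : z₂ ∈ J) (hz₃ : z₃ ∈ J)
    (h12 : z₁ ≠ z₂) (h13 : z₁ ≠ z₃) (h23 : z₂ ≠ z₃)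
    (P : ℕ → ℂ × ℂ × ℂ)
    (hbdd : ∀ n, ∃ z ∈ J, Bornology.IsBounded (Set.range fun k =>
      (fun q : ℂ × ℂ =>
        (p.eval q.1, q.2 ^ 2 + (P n).1 * q.1 ^ 2 + (P n).2.1 * q.1 + (P n).2.2))^[k]
        (z, 0)))
    (hnorm : Filter.Tendsto (fun n => ‖P n‖) Filter.atTop Filter.atTop)
    (a b c : ℂ)
    (hdir : Filter.Tendsto (fun n => (‖P n‖)⁻¹ • P n) Filter.atTop (nhds (a, b, c))) :
    ∃ z ∈ J, a * z ^ 2 + b * z + c = 0 := by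
  by_contra hcon
  push_neg at hcon
  have hne : J.Nonempty := ⟨z₁, hz₁⟩
  -- the limit direction quadratic has a positive minimum modulus δ on J
  have hqc : ContinuousOn (fun z : ℂ => ‖a * z ^ 2 + b * z + c‖) J := by
    apply Continuous.continuousOn; continuity
  obtain ⟨z₀, hz₀J, hz₀min⟩ := hJc.exists_isMinOn hne hqc
  set δ : ℝ := ‖a * z₀ ^ 2 + b * z₀ + c‖ with hδdef
  have hδpos : 0 < δ := norm_pos_iff.mpr (hcon z₀ hz₀J)
  have hδle : ∀ z ∈ J, δ ≤ ‖a * z ^ 2 + b * z + c‖ := fun z hz => hz₀min hz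
  -- J is bounded
  obtain ⟨K, hK⟩ := isBounded_iff_forall_norm_le.mp hJc.isBounded
  have hK0 : 0 ≤ K := le_trans (norm_nonneg z₁) (hK z₁ hz₁)
  set C : ℝ := K ^ 2 + K + 1 with hCdef
  have hC1 : 1 ≤ C := by nlinarith
  have hCpos : 0 < C := by linarith
  -- pick a good index n
  have hεpos : 0 < δ / (2 * C) := by positivity
  have h1 := Metric.tendsto_nhds.mp hdir _ hεpos
  have h2 := hnorm.eventually_ge_atTop (max 1 ((8 * C + 8) / δ ^ 2))
  obtain ⟨n, hdist, hR⟩ := (h1.and h2).exists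
  set R : ℝ := ‖P n‖ with hRdef
  have hR1 : 1 ≤ R := le_trans (le_max_left _ _) hR
  have hRpos : 0 < R := lt_of_lt_of_le one_pos hR1
  have hRbig : (8 * C + 8) / δ ^ 2 ≤ R := le_trans (le_max_right _ _) hR
  have hRbig' : 8 * C + 8 ≤ δ ^ 2 * R := by
    rw [div_le_iff₀ (by positivity)] at hRbig; linarith [hRbig]
  -- the normalized parameter is δ/(2C)-close to (a,b,c)
  set v : ℂ × ℂ × ℂ := (‖P n‖)⁻¹ • P n - (a, b, c) with hv
  have hvnorm : ‖v‖ ≤ δ / (2 * C) := by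
    rw [hv, ← dist_eq_norm]; exact le_of_lt hdist
  -- lower bound for the actual quadratic on J
  have hqn_lower : ∀ z ∈ J, R * (δ / 2) ≤ ‖(P n).1 * z ^ 2 + (P n).2.1 * z + (P n).2.2‖ := by
    intro z hz
    have hva : R • (v.1 + a) = (P n).1 := by
      have : v.1 = R⁻¹ • (P n).1 - a := by simp [hv, hRdef]
      rw [this, sub_add_cancel, smul_inv_smul₀ (ne_of_gt hRpos)]
    have hvb : R • (v.2.1 + b) = (P n).2.1 := by
      have : v.2.1 = R⁻¹ • (P n).2.1 - b := by simp [hv, hRdef]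
      rw [this, sub_add_cancel, smul_inv_smul₀ (ne_of_gt hRpos)]
    have hvc : R • (v.2.2 + c) = (P n).2.2 := by
      have : v.2.2 = R⁻¹ • (P n).2.2 - c := by simp [hv, hRdef]
      rw [this, sub_add_cancel, smul_inv_smul₀ (ne_of_gt hRpos)]
    have hsplit : (P n).1 * z ^ 2 + (P n).2.1 * z + (P n).2.2
        = R • ((v.1 * z ^ 2 + v.2.1 * z + v.2.2) + (a * z ^ 2 + b * z + c)) := by
      rw [show (v.1 * z ^ 2 + v.2.1 * z + v.2.2) + (a * z ^ 2 + b * z + c)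
          = (v.1 + a) * z ^ 2 + (v.2.1 + b) * z + (v.2.2 + c) from by ring]
      rw [smul_add, smul_add, ← smul_mul_assoc, ← smul_mul_assoc, hva, hvb, hvc]
    rw [hsplit, norm_smul, Real.norm_eq_abs, abs_of_pos hRpos]
    have hvp : ‖v.1 * z ^ 2 + v.2.1 * z + v.2.2‖ ≤ δ / 2 := by
      have := quad_poly_bound v K hK0 z (hK z hz)
      have h' : ‖v‖ * C ≤ δ / 2 := by
        calc ‖v‖ * C ≤ (δ / (2 * C)) * C :=
              mul_le_mul_of_nonneg_right hvnorm (le_of_lt hCpos)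
          _ = δ / 2 := by field_simp
      calc ‖v.1 * z ^ 2 + v.2.1 * z + v.2.2‖ ≤ ‖v‖ * C := this
        _ ≤ δ / 2 := h'
    have hlow : δ / 2 ≤ ‖(v.1 * z ^ 2 + v.2.1 * z + v.2.2) + (a * z ^ 2 + b * z + c)‖ := by
      have h4 := norm_sub_le ((v.1 * z ^ 2 + v.2.1 * z + v.2.2) + (a * z ^ 2 + b * z + c))
        (v.1 * z ^ 2 + v.2.1 * z + v.2.2)
      rw [add_sub_cancel_left] at h4
      have h5 := hδle z hz
      linarith
    calc R * (δ / 2) ≤ R * ‖(v.1 * z ^ 2 + v.2.1 * z + v.2.2) + (a * z ^ 2 + b * z + c)‖ :=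
          mul_le_mul_of_nonneg_left hlow (le_of_lt hRpos)
      _ = _ := rfl
  -- upper bound for the actual quadratic on J
  have hqn_upper : ∀ z ∈ J, ‖(P n).1 * z ^ 2 + (P n).2.1 * z + (P n).2.2‖ ≤ C * R := by
    intro z hz
    have := quad_poly_bound (P n) K hK0 z (hK z hz)
    calc ‖(P n).1 * z ^ 2 + (P n).2.1 * z + (P n).2.2‖ ≤ ‖P n‖ * C := this
      _ = C * R := by rw [hRdef]; ring
  -- the orbit
  obtain ⟨z, hzJ, hb⟩ := hbdd n
  set F : ℂ × ℂ → ℂ × ℂ := fun q =>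
    (p.eval q.1, q.2 ^ 2 + (P n).1 * q.1 ^ 2 + (P n).2.1 * q.1 + (P n).2.2) with hF
  set o : ℕ → ℂ × ℂ := fun k => F^[k] (z, 0) with ho
  have hoJ : ∀ k, (o k).1 ∈ J := by
    intro k
    induction k with
    | zero => simpa [ho] using hzJ
    | succ k ih =>
      have : o (k + 1) = F (o k) := by rw [ho]; exact Function.iterate_succ_apply' F k (z, 0)
      rw [this]
      exact hJinv _ ih
  have hrec : ∀ k, (o (k + 1)).2
      = (o k).2 ^ 2 + (P n).1 * (o k).1 ^ 2 + (P n).2.1 * (o k).1 + (P n).2.2 := by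
    intro k
    have : o (k + 1) = F (o k) := by rw [ho]; exact Function.iterate_succ_apply' F k (z, 0)
    rw [this]
  -- step estimate
  have hstep : ∀ k t, C * R + 2 ≤ t → t ≤ ‖(o k).2‖ → 2 * t ≤ ‖(o (k + 1)).2‖ := by
    intro k t ht hwt
    rw [hrec k, show (o k).2 ^ 2 + (P n).1 * (o k).1 ^ 2 + (P n).2.1 * (o k).1 + (P n).2.2
        = (o k).2 ^ 2 + ((P n).1 * (o k).1 ^ 2 + (P n).2.1 * (o k).1 + (P n).2.2) from by ring]
    set w : ℂ := (o k).2
    set Q : ℂ := (P n).1 * (o k).1 ^ 2 + (P n).2.1 * (o k).1 + (P n).2.2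
    have hQ : ‖Q‖ ≤ C * R := hqn_upper _ (hoJ k)
    have h4 := norm_add_le (w ^ 2 + Q) (-Q)
    simp only [add_neg_cancel_right, norm_neg] at h4
    rw [norm_pow] at h4
    have hCR : 0 ≤ C * R := by positivity
    nlinarith [h4, hQ, hwt, ht, hCR, sq_nonneg (‖w‖ - t)]
  -- base: the first step is large, the second exceeds the escape radius
  have hw1 : R * (δ / 2) ≤ ‖(o 1).2‖ := by
    have ho1 : (o 1).2 = (P n).1 * z ^ 2 + (P n).2.1 * z + (P n).2.2 := by
      rw [hrec 0]
      have ho0 : o 0 = (z, 0) := rfl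
      rw [ho0]
      simp
    rw [ho1]
    exact hqn_lower z hzJ
  have hw2 : C * R + 2 ≤ ‖(o 2).2‖ := by
    rw [hrec 1, show (o 1).2 ^ 2 + (P n).1 * (o 1).1 ^ 2 + (P n).2.1 * (o 1).1 + (P n).2.2
        = (o 1).2 ^ 2 + ((P n).1 * (o 1).1 ^ 2 + (P n).2.1 * (o 1).1 + (P n).2.2) from by ring]
    have hQ : ‖(P n).1 * (o 1).1 ^ 2 + (P n).2.1 * (o 1).1 + (P n).2.2‖ ≤ C * R :=
      hqn_upper _ (hoJ 1)
    have h4 := norm_add_le ((o 1).2 ^ 2 + ((P n).1 * (o 1).1 ^ 2 + (P n).2.1 * (o 1).1 + (P n).2.2))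
      (-((P n).1 * (o 1).1 ^ 2 + (P n).2.1 * (o 1).1 + (P n).2.2))
    simp only [add_neg_cancel_right, norm_neg] at h4
    rw [norm_pow] at h4
    -- ‖(o 1).2‖ ≥ Rδ/2, and (Rδ/2)² ≥ 2CR + 2
    nlinarith [h4, hQ, hw1, hRbig', hR1, hCpos, hδpos, hRpos,
      mul_le_mul hw1 hw1 (by positivity) (norm_nonneg (o 1).2)]
  -- growth by induction
  have hgrow : ∀ k, 2 ^ k * (C * R + 2) ≤ ‖(o (k + 2)).2‖ := by
    intro k
    induction k with
    | zero => rw [pow_zero, one_mul]; exact hw2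
    | succ k ih =>
      have hCR2 : C * R + 2 ≤ 2 ^ k * (C * R + 2) := by
        have h2k : (1 : ℝ) ≤ 2 ^ k := by
          calc (1 : ℝ) = 1 ^ k := (one_pow k).symm
            _ ≤ 2 ^ k := pow_le_pow_left₀ (by norm_num) (by norm_num) k
        have hc2 : (0:ℝ) ≤ C * R + 2 := by positivity
        have := mul_le_mul_of_nonneg_right h2k hc2
        linarith
      have := hstep (k + 2) (2 ^ k * (C * R + 2)) hCR2 ih
      calc (2 : ℝ) ^ (k + 1) * (C * R + 2) = 2 * (2 ^ k * (C * R + 2)) := by ring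
        _ ≤ ‖(o (k + 1 + 2)).2‖ := by
            have hk : k + 1 + 2 = k + 2 + 1 := by ring
            rw [hk]; exact this
  -- contradiction with boundedness
  obtain ⟨M, hM⟩ := isBounded_iff_forall_norm_le.mp hb
  have hMo : ∀ k, ‖o k‖ ≤ M := fun k => hM _ ⟨k, rfl⟩
  obtain ⟨k, hk⟩ := pow_unbounded_of_one_lt M (by norm_num : (1:ℝ) < 2)
  have h6 := hgrow k
  have h7 : ‖(o (k + 2)).2‖ ≤ M := le_trans (norm_snd_le _) (hMo (k + 2))
  have h8 : (2 : ℝ) ^ k ≤ 2 ^ k * (C * R + 2) := by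
    have h1k : (1:ℝ) ≤ C * R + 2 := by nlinarith [hCpos, hRpos]
    have h0k : (0:ℝ) ≤ (2:ℝ) ^ k := le_of_lt (pow_pos (by norm_num) k)
    have := mul_le_mul_of_nonneg_left h1k h0k
    linarith
  linarith
end

section
/- Let λ ∈ ℂ, let F(z,w) = (z², w² + λ z), and let z ∈ ℂ with |z| = 1. Then the forward orbit {Fⁿ(z,0) : n ∈ ℕ} is a bounded subset of ℂ² if and only if the orbit of 0 under the map w ↦ w² + λ is bounded, i.e. if and only if λ belongs to the Mandelbrot set. -/
/-!
Write `z = u²`. On the orbit of `(u², 0)` the second coordinate is `cₙ u^(2ⁿ)`, where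
`cₙ₊₁ = cₙ² + λ`: the factor `u^(2ⁿ)` squares along with the base and absorbs the `λ z`
term. For `|u| = 1` this gives `‖Fⁿ(z, 0)‖ = max 1 |cₙ|`.
-/

def quadSkew {R : Type*} [Semiring R] (lam : R) (q : R × R) : R × R :=
  (q.1 ^ 2, q.2 ^ 2 + lam * q.1)

theorem quadSkew_iterate_sq_mul {R : Type*} [CommSemiring R] (lam u v : R) (n : ℕ) :
    (quadSkew lam)^[n] (u ^ 2, v * u) =
      ((u ^ 2) ^ 2 ^ n, (fun w => w ^ 2 + lam)^[n] v * u ^ 2 ^ n) := by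
  induction n with
  | zero => simp
  | succ n ih =>
    rw [Function.iterate_succ_apply', ih, Function.iterate_succ_apply', quadSkew]
    ext <;> dsimp only <;> ring

theorem norm_quadSkew_iterate_sq {K : Type*} [NormedField K] (lam u : K) (hu : ‖u‖ = 1)
    (n : ℕ) :
    ‖(quadSkew lam)^[n] (u ^ 2, 0)‖ = max 1 ‖(fun w => w ^ 2 + lam)^[n] 0‖ := by
  rw [← zero_mul u, quadSkew_iterate_sq_mul, Prod.norm_mk, norm_mul]
  simp only [norm_pow, hu, one_pow, mul_one, zero_mul]

theorem isBounded_range_iff_of_norm_eq_max_one {ι E F : Type*} [SeminormedAddGroup E]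
    [SeminormedAddGroup F] {f : ι → E} {a : ι → F} (h : ∀ i, ‖f i‖ = max 1 ‖a i‖) :
    Bornology.IsBounded (Set.range f) ↔ Bornology.IsBounded (Set.range a) := by
  simp only [isBounded_iff_forall_norm_le, Set.forall_mem_range, h, max_le_iff]
  constructor
  · rintro ⟨C, hC⟩
    exact ⟨C, fun i => (hC i).2⟩
  · rintro ⟨C, hC⟩
    exact ⟨max 1 C, fun i => ⟨le_max_left _ _, (hC i).trans (le_max_right _ _)⟩⟩

/-- For `F(z,w) = (z², w² + λ z)` and `|z| = 1`, the orbit of `(z,0)` under `F` is bounded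
if and only if the orbit of `0` under `w ↦ w² + λ` is bounded, i.e. iff `λ` belongs to
the Mandelbrot set. -/
theorem fiber_bifurcation_is_mandelbrot
    (lam : ℂ) (F : ℂ × ℂ → ℂ × ℂ)
    (hF : ∀ q : ℂ × ℂ, F q = (q.1 ^ 2, q.2 ^ 2 + lam * q.1))
    (z : ℂ) (hz : ‖z‖ = 1) :
    Bornology.IsBounded (Set.range fun n => F^[n] (z, 0)) ↔
    Bornology.IsBounded (Set.range fun n => (fun w : ℂ => w ^ 2 + lam)^[n] 0) := by
  obtain ⟨u, rfl⟩ := IsAlgClosed.exists_pow_nat_eq z two_pos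
  have hu : ‖u‖ = 1 := by
    rwa [norm_pow, pow_eq_one_iff_of_nonneg (norm_nonneg u) two_ne_zero] at hz
  obtain rfl : F = quadSkew lam := funext hF
  exact isBounded_range_iff_of_norm_eq_max_one (norm_quadSkew_iterate_sq lam u hu)
end

section
/- There exists ε₀ > 0 such that for every ε ∈ (0, ε₀) and every θ ∈ [0,1) with θ ∉ {0, 1/3, 1/2, 2/3}, there exists an integer n ≥ 0 such that the fractional part of 2ⁿ θ lies in (ε, 1/3 − ε) ∪ (2/3 + ε, 1 − ε). -/
/-- Distance from `x` to the exceptional set `{0, 1/3, 1/2, 2/3}` (with `1 ≡ 0`). -/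
noncomputable def dE (x : ℝ) : ℝ :=
  min (min x (1 - x)) (min |x - 1/3| (min |x - 1/2| |x - 2/3|))

lemma dE_le_1 (x : ℝ) : dE x ≤ x := (min_le_left _ _).trans (min_le_left _ _)
lemma dE_le_2 (x : ℝ) : dE x ≤ 1 - x := (min_le_left _ _).trans (min_le_right _ _)
lemma dE_le_3 (x : ℝ) : dE x ≤ |x - 1/3| := (min_le_right _ _).trans (min_le_left _ _)
lemma dE_le_4 (x : ℝ) : dE x ≤ |x - 1/2| :=
  (min_le_right _ _).trans ((min_le_right _ _).trans (min_le_left _ _))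
lemma dE_le_5 (x : ℝ) : dE x ≤ |x - 2/3| :=
  (min_le_right _ _).trans ((min_le_right _ _).trans (min_le_right _ _))

lemma le_dE {a x : ℝ} (h1 : a ≤ x) (h2 : a ≤ 1 - x) (h3 : a ≤ |x - 1/3|)
    (h4 : a ≤ |x - 1/2|) (h5 : a ≤ |x - 2/3|) : a ≤ dE x :=
  le_min (le_min h1 h2) (le_min h3 (le_min h4 h5))

/-- Key growth lemma: if `x` and its doubling image are both in the bad region,
then `dE` at least doubles. -/
lemma dE_step (ε : ℝ) (hε0 : 0 < ε) (hε : ε < 1/24) (x : ℝ) (hx0 : 0 ≤ x) (hx1 : x < 1)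
    (hb1 : x ∉ Set.Ioo ε (1/3 - ε) ∪ Set.Ioo (2/3 + ε) (1 - ε))
    (hb2 : Int.fract (2 * x) ∉ Set.Ioo ε (1/3 - ε) ∪ Set.Ioo (2/3 + ε) (1 - ε)) :
    2 * dE x ≤ dE (Int.fract (2 * x)) := by
  simp only [Set.mem_union, Set.mem_Ioo, not_or, not_and] at hb1 hb2
  push_neg at hb1 hb2
  have hc1 := dE_le_1 x
  have hc2 := dE_le_2 x
  have hc3 := dE_le_3 x
  have hc4 := dE_le_4 x
  have hc5 := dE_le_5 x
  rcases lt_or_ge x (1/2) with hx | hx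
  · -- `Int.fract (2*x) = 2*x`
    have hy : Int.fract (2 * x) = 2 * x := Int.fract_eq_self.mpr ⟨by linarith, by linarith⟩
    rw [hy] at hb2 ⊢
    by_cases hxe : ε < x
    · -- middle bad interval: `1/3 - ε ≤ x < 1/2`
      have hxm : 1/3 - ε ≤ x := hb1.1 hxe
      rcases le_or_gt (2 * x) (2/3 + ε) with h2x | h2x
      · -- x near 1/3
        have habs : |x - 1/3| ≤ ε := abs_le.mpr ⟨by linarith, by linarith⟩
        have h5 : |2*x - 2/3| = 2 * |x - 1/3| := by
          rw [show (2*x - 2/3 : ℝ) = 2 * (x - 1/3) by ring, abs_mul]; norm_num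
        refine le_dE (by linarith) (by linarith)
          (le_abs.mpr (Or.inl (by linarith)))
          (le_abs.mpr (Or.inl (by linarith)))
          (by rw [h5]; linarith)
      · -- x near 1/2 from below
        have hytop : 1 - ε ≤ 2 * x := hb2.2 h2x
        have heq : |x - 1/2| = 1/2 - x := by rw [abs_of_nonpos (by linarith)]; ring
        refine le_dE (by linarith) (by linarith)
          (le_abs.mpr (Or.inl (by linarith)))
          (le_abs.mpr (Or.inl (by linarith)))
          (le_abs.mpr (Or.inl (by linarith)))
    · -- bottom bad interval: `0 ≤ x ≤ ε`
      have hxe' : x ≤ ε := le_of_not_gt hxe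
      refine le_dE (by linarith) (by linarith)
        (le_abs.mpr (Or.inr (by linarith)))
        (le_abs.mpr (Or.inr (by linarith)))
        (le_abs.mpr (Or.inr (by linarith)))
  · -- `Int.fract (2*x) = 2*x - 1`
    have hy : Int.fract (2 * x) = 2 * x - 1 := by
      have h1 : Int.fract (2 * x - (1 : ℤ)) = Int.fract (2 * x) := Int.fract_sub_intCast (2 * x) 1
      have h2 : Int.fract (2 * x - (1 : ℤ)) = 2 * x - 1 := by
        push_cast
        exact Int.fract_eq_self.mpr ⟨by linarith, by linarith⟩
      rw [← h1, h2]
    rw [hy] at hb2 ⊢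
    rcases le_or_gt x (2/3 + ε) with hx2 | hx2
    · -- middle bad interval: `1/2 ≤ x ≤ 2/3 + ε`
      by_cases hyε : ε < 2 * x - 1
      · -- image in middle: x near 2/3
        have hym : 1/3 - ε ≤ 2 * x - 1 := hb2.1 hyε
        have habs : |x - 2/3| ≤ ε := abs_le.mpr ⟨by linarith, by linarith⟩
        have h3 : |2*x - 1 - 1/3| = 2 * |x - 2/3| := by
          rw [show (2*x - 1 - 1/3 : ℝ) = 2 * (x - 2/3) by ring, abs_mul]; norm_num
        refine le_dE (by linarith) (by linarith)
          (by rw [h3]; linarith)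
          (le_abs.mpr (Or.inr (by linarith)))
          (le_abs.mpr (Or.inr (by linarith)))
      · -- image near 0: x near 1/2 from above
        have hyε' : 2 * x - 1 ≤ ε := le_of_not_gt hyε
        have heq : |x - 1/2| = x - 1/2 := abs_of_nonneg (by linarith)
        refine le_dE (by linarith) (by linarith)
          (le_abs.mpr (Or.inr (by linarith)))
          (le_abs.mpr (Or.inr (by linarith)))
          (le_abs.mpr (Or.inr (by linarith)))
    · -- top bad interval: `1 - ε ≤ x < 1`
      have hxt : 1 - ε ≤ x := hb1.2 hx2
      refine le_dE (by linarith) (by linarith)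
        (le_abs.mpr (Or.inl (by linarith)))
        (le_abs.mpr (Or.inl (by linarith)))
        (le_abs.mpr (Or.inl (by linarith)))

/-- Every orbit of the doubling map on `ℝ/ℤ` other than those of `0, 1/3, 1/2, 2/3`
enters the region `(ε, 1/3 − ε) ∪ (2/3 + ε, 1 − ε)` for every small enough `ε`. -/
theorem doubling_map_enters_good_region :
    ∃ ε₀ : ℝ, 0 < ε₀ ∧ ∀ ε : ℝ, 0 < ε → ε < ε₀ →
      ∀ θ : ℝ, 0 ≤ θ → θ < 1 → θ ∉ ({0, 1/3, 1/2, 2/3} : Set ℝ) →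
        ∃ n : ℕ, Int.fract (2 ^ n * θ) ∈
          Set.Ioo ε (1/3 - ε) ∪ Set.Ioo (2/3 + ε) (1 - ε) := by
  refine ⟨1/24, by norm_num, ?_⟩
  intro ε hε0 hε θ hθ0 hθ1 hθE
  simp only [Set.mem_insert_iff, Set.mem_singleton_iff, not_or] at hθE
  obtain ⟨hE0, hE1, hE2, hE3⟩ := hθE
  by_contra hcon
  push_neg at hcon
  have hd0 : 0 < dE θ := by
    refine lt_min (lt_min (lt_of_le_of_ne hθ0 (Ne.symm hE0)) (by linarith))
      (lt_min (abs_pos.mpr (sub_ne_zero.mpr hE1))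
        (lt_min (abs_pos.mpr (sub_ne_zero.mpr hE2)) (abs_pos.mpr (sub_ne_zero.mpr hE3))))
  have hfr : ∀ n : ℕ, Int.fract (2 ^ (n+1) * θ) = Int.fract (2 * Int.fract (2 ^ n * θ)) := by
    intro n
    have h : 2 * Int.fract (2 ^ n * θ) = 2 ^ (n+1) * θ - ((2 * ⌊2 ^ n * θ⌋ : ℤ) : ℝ) := by
      rw [Int.fract]; push_cast; ring
    rw [h, Int.fract_sub_intCast]
  have key : ∀ n : ℕ, 2 ^ n * dE θ ≤ dE (Int.fract (2 ^ n * θ)) := by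
    intro n
    induction n with
    | zero => simp [Int.fract_eq_self.mpr ⟨hθ0, hθ1⟩]
    | succ n ih =>
      have hx0 := Int.fract_nonneg ((2:ℝ) ^ n * θ)
      have hx1 := Int.fract_lt_one ((2:ℝ) ^ n * θ)
      have hstep := dE_step ε hε0 hε _ hx0 hx1 (hcon n) (by rw [← hfr n]; exact hcon (n+1))
      rw [hfr n]
      calc 2 ^ (n+1) * dE θ = 2 * (2 ^ n * dE θ) := by ring
        _ ≤ 2 * dE (Int.fract (2 ^ n * θ)) := by linarith
        _ ≤ dE (Int.fract (2 * Int.fract (2 ^ n * θ))) := hstep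
  obtain ⟨n, hn⟩ := pow_unbounded_of_one_lt (1 / dE θ) (by norm_num : (1:ℝ) < 2)
  have h1 : 1 < 2 ^ n * dE θ := by
    rw [div_lt_iff₀ hd0] at hn; linarith
  have h2 : dE (Int.fract (2 ^ n * θ)) ≤ 1 := by
    have := dE_le_1 (Int.fract (2 ^ n * θ))
    have := Int.fract_lt_one ((2:ℝ) ^ n * θ)
    linarith
  linarith [key n]
end

section
/- Let p(x) = x² − 2. There exists δ₀ > 0 such that for every δ ∈ (0, δ₀) and every x ∈ [−2,2] with x ∉ {−2, −1, 2}, there exists an integer n ≥ 0 such that −1 + δ < pⁿ(x) < 2 − δ. -/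
set_option maxHeartbeats 1000000 in
/-- For `p(x) = x² − 2` on its Julia set `[−2,2]`: every orbit other than those of the
exceptional points `−2, −1, 2` enters the subinterval `(−1 + δ, 2 − δ)` for every small
enough `δ`. -/
theorem chebyshev_orbit_enters_core_interval :
    ∃ δ₀ : ℝ, 0 < δ₀ ∧ ∀ δ : ℝ, 0 < δ → δ < δ₀ →
      ∀ x : ℝ, x ∈ Set.Icc (-2 : ℝ) 2 → x ∉ ({-2, -1, 2} : Set ℝ) →
        ∃ n : ℕ, -1 + δ < (fun y : ℝ => y ^ 2 - 2)^[n] x ∧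
          (fun y : ℝ => y ^ 2 - 2)^[n] x < 2 - δ := by
  refine ⟨1/10, by norm_num, ?_⟩
  intro δ hδ hδ' x hx hxe
  by_contra h
  push_neg at h
  set p : ℝ → ℝ := fun y : ℝ => y ^ 2 - 2 with hp
  set d : ℝ → ℝ := fun y => min |y + 2| (min |y + 1| |y - 2|) with hd
  -- all iterates stay in [-2, 2]
  have hmem : ∀ n, p^[n] x ∈ Set.Icc (-2:ℝ) 2 := by
    intro n
    induction n with
    | zero => simpa using hx
    | succ n ih =>
      rw [Function.iterate_succ_apply']
      obtain ⟨h1, h2⟩ := ih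
      constructor
      · simp only [hp, Set.mem_Icc]
        nlinarith [sq_nonneg (p^[n] x)]
      · simp only [hp, Set.mem_Icc]
        nlinarith [sq_nonneg (p^[n] x - 2), sq_nonneg (p^[n] x + 2)]
  -- all iterates are in the "bad" set
  have hbad : ∀ n, p^[n] x ≤ -1 + δ ∨ 2 - δ ≤ p^[n] x := by
    intro n
    by_cases h1 : -1 + δ < p^[n] x
    · right; exact h n h1
    · left; linarith
  -- key expansion step
  have key : ∀ y, y ∈ Set.Icc (-2:ℝ) 2 → (y ≤ -1 + δ ∨ 2 - δ ≤ y) →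
      (p y ≤ -1 + δ ∨ 2 - δ ≤ p y) → d y ≤ δ ∧ (3/2) * d y ≤ d (p y) := by
    intro y hy hby hbpy
    obtain ⟨hy1, hy2⟩ := hy
    have hpy : p y = y^2 - 2 := rfl
    rcases hby with hb | hb
    · rcases hbpy with hbp | hbp
      · -- Case C : y near -1
        have hsq : y^2 ≤ 1 + δ := by simp only [hp] at hbp; linarith
        have h1 : y + 1 ≤ δ := by linarith
        have h2 : -(y + 1) ≤ δ := by nlinarith
        have habs : |y + 1| ≤ δ := abs_le.mpr ⟨by linarith, h1⟩
        have hdy : d y ≤ |y + 1| := le_trans (min_le_right _ _) (min_le_left _ _)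
        refine ⟨le_trans hdy habs, ?_⟩
        have habs_nonneg : (0:ℝ) ≤ |y + 1| := abs_nonneg _
        refine le_min ?_ (le_min ?_ ?_)
        · -- |p y + 2| = y^2 ≥ (1-δ)^2
          have : |p y + 2| = y^2 := by
            rw [hpy]; rw [show y^2 - 2 + 2 = y^2 by ring, abs_of_nonneg (sq_nonneg y)]
          rw [this]
          have hyneg : y ≤ -1 + δ := hb
          have : (1-δ)^2 ≤ y^2 := by nlinarith
          calc (3/2) * d y ≤ (3/2) * |y+1| := by linarith [mul_le_mul_of_nonneg_left hdy (by norm_num : (0:ℝ) ≤ 3/2)]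
            _ ≤ (3/2) * δ := by linarith [mul_le_mul_of_nonneg_left habs (by norm_num : (0:ℝ) ≤ 3/2)]
            _ ≤ (1-δ)^2 := by nlinarith
            _ ≤ y^2 := this
        · -- |p y + 1| = |y+1| * (1 - y)
          have heq : |p y + 1| = |y + 1| * (1 - y) := by
            rw [hpy, show y^2 - 2 + 1 = (y+1) * (y-1) by ring, abs_mul,
              abs_of_nonpos (by linarith : y - 1 ≤ 0)]
            ring
          rw [heq]
          have : (3/2) * |y+1| ≤ |y+1| * (1 - y) := by nlinarith
          calc (3/2) * d y ≤ (3/2) * |y+1| := by linarith [mul_le_mul_of_nonneg_left hdy (by norm_num : (0:ℝ) ≤ 3/2)]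
            _ ≤ |y+1| * (1 - y) := this
        · -- |p y - 2| = 4 - y^2 ≥ 4 - (1+δ)
          have : |p y - 2| = 4 - y^2 := by
            rw [hpy, show y^2 - 2 - 2 = -(4 - y^2) by ring, abs_neg,
              abs_of_nonneg (by nlinarith : (0:ℝ) ≤ 4 - y^2)]
          rw [this]
          calc (3/2) * d y ≤ (3/2) * δ := by nlinarith [le_trans hdy habs]
            _ ≤ 4 - y^2 := by nlinarith
      · -- Case B : y near -2
        have hsq : 4 - δ ≤ y^2 := by simp only [hp] at hbp; linarith
        have h2 : y + 2 ≤ δ / 2 := by nlinarith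
        have hy2' : (0:ℝ) ≤ y + 2 := by linarith
        have hdy : d y ≤ y + 2 := by
          calc d y ≤ |y + 2| := min_le_left _ _
            _ = y + 2 := abs_of_nonneg hy2'
        refine ⟨by linarith, ?_⟩
        refine le_min ?_ (le_min ?_ ?_)
        · have : |p y + 2| = y^2 := by
            rw [hpy, show y^2 - 2 + 2 = y^2 by ring, abs_of_nonneg (sq_nonneg y)]
          rw [this]; nlinarith
        · have : |p y + 1| = y^2 - 1 := by
            rw [hpy, show y^2 - 2 + 1 = y^2 - 1 by ring,
              abs_of_nonneg (by nlinarith : (0:ℝ) ≤ y^2 - 1)]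
          rw [this]; nlinarith
        · have : |p y - 2| = 4 - y^2 := by
            rw [hpy, show y^2 - 2 - 2 = -(4 - y^2) by ring, abs_neg,
              abs_of_nonneg (by nlinarith : (0:ℝ) ≤ 4 - y^2)]
          rw [this]
          nlinarith
    · -- Case A : y near 2
      have hyge : (19:ℝ)/10 ≤ y := by linarith
      rcases hbpy with hbp | hbp
      · exfalso; simp only [hp] at hbp; nlinarith
      have hsq : 4 - δ ≤ y^2 := by simp only [hp] at hbp; linarith
      have h2 : 2 - y ≤ δ / 3 := by nlinarith
      have hdy : d y ≤ 2 - y := by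
        calc d y ≤ min |y+1| |y-2| := min_le_right _ _
          _ ≤ |y - 2| := min_le_right _ _
          _ = 2 - y := by rw [abs_of_nonpos (by linarith : y - 2 ≤ 0)]; ring
      refine ⟨by linarith, ?_⟩
      refine le_min ?_ (le_min ?_ ?_)
      · have : |p y + 2| = y^2 := by
          rw [hpy, show y^2 - 2 + 2 = y^2 by ring, abs_of_nonneg (sq_nonneg y)]
        rw [this]; nlinarith
      · have : |p y + 1| = y^2 - 1 := by
          rw [hpy, show y^2 - 2 + 1 = y^2 - 1 by ring,
            abs_of_nonneg (by nlinarith : (0:ℝ) ≤ y^2 - 1)]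
        rw [this]; nlinarith
      · have : |p y - 2| = 4 - y^2 := by
          rw [hpy, show y^2 - 2 - 2 = -(4 - y^2) by ring, abs_neg,
            abs_of_nonneg (by nlinarith : (0:ℝ) ≤ 4 - y^2)]
        rw [this]
        -- 4 - y^2 = (2-y)(2+y) ≥ (3.9)(2-y) ≥ (3/2)(2-y)
        nlinarith
  -- d x > 0
  have hxne : x ≠ -2 ∧ x ≠ -1 ∧ x ≠ 2 := by
    simp only [Set.mem_insert_iff, Set.mem_singleton_iff] at hxe
    push_neg at hxe
    exact hxe
  have hdx : 0 < d x := by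
    have h1 : 0 < |x + 2| := abs_pos.mpr (by intro hc; exact hxne.1 (by linarith))
    have h2 : 0 < |x + 1| := abs_pos.mpr (by intro hc; exact hxne.2.1 (by linarith))
    have h3 : 0 < |x - 2| := abs_pos.mpr (by intro hc; exact hxne.2.2 (by linarith))
    exact lt_min h1 (lt_min h2 h3)
  -- expansion by induction
  have hgrow : ∀ n, (3/2:ℝ)^n * d x ≤ d (p^[n] x) := by
    intro n
    induction n with
    | zero => simp
    | succ n ih =>
      have hk := key (p^[n] x) (hmem n) (hbad n) (by
        have := hbad (n+1)
        rwa [Function.iterate_succ_apply'] at this)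
      rw [Function.iterate_succ_apply', pow_succ]
      calc (3/2:ℝ)^n * (3/2) * d x = (3/2) * ((3/2)^n * d x) := by ring
        _ ≤ (3/2) * d (p^[n] x) := by
            have : (0:ℝ) ≤ 3/2 := by norm_num
            nlinarith
        _ ≤ d (p (p^[n] x)) := hk.2
  -- contradiction
  obtain ⟨n, hn⟩ := pow_unbounded_of_one_lt (δ / d x) (by norm_num : (1:ℝ) < 3/2)
  have hk := key (p^[n] x) (hmem n) (hbad n) (by
    have := hbad (n+1)
    rwa [Function.iterate_succ_apply'] at this)
  have h1 : δ < (3/2)^n * d x := by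
    rw [div_lt_iff₀ hdx] at hn
    linarith
  linarith [hgrow n, hk.1]
end

section
/- There exists t₀ > 0 such that for all real t ≥ t₀ there exists δ > 0 such that for every z ∈ [−2,2] with |z + 1| < δ or |z − 2| < δ, and every w ∈ ℂ with |Im w| ≤ δ and |Re w| ≤ 1/3, the complex number w' = w² + t(z+1)(2−z) satisfies |Im w'| ≤ δ and |Re w'| ≤ 1/4. -/
/-- For `t` large, over base points `z ∈ [−2,2]` close to `−1` or `2`, the fiber map
`w ↦ w² + t(z+1)(2−z)` maps the strip `U_δ = {|Im w| ≤ δ, |Re w| ≤ 1/3}` into the smaller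
strip `U'_δ = {|Im w| ≤ δ, |Re w| ≤ 1/4}`. -/
theorem fiber_strip_contraction :
    ∃ t₀ : ℝ, 0 < t₀ ∧ ∀ t : ℝ, t₀ ≤ t → ∃ δ : ℝ, 0 < δ ∧
      ∀ z : ℝ, z ∈ Set.Icc (-2 : ℝ) 2 → (|z + 1| < δ ∨ |z - 2| < δ) →
        ∀ w : ℂ, |w.im| ≤ δ → |w.re| ≤ 1/3 →
          |(w ^ 2 + ((t * (z + 1) * (2 - z) : ℝ) : ℂ)).im| ≤ δ ∧
          |(w ^ 2 + ((t * (z + 1) * (2 - z) : ℝ) : ℂ)).re| ≤ 1/4 := by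
  refine ⟨1, one_pos, fun t ht => ⟨1 / (100 * t), by positivity, ?_⟩⟩
  intro z hz hzd w him hre
  obtain ⟨hz1, hz2⟩ := hz
  have ht0 : (0 : ℝ) < t := lt_of_lt_of_le one_pos ht
  have hδ1 : 1 / (100 * t) ≤ 1 / 100 := by
    apply div_le_div_of_nonneg_left (by norm_num) (by norm_num)
    nlinarith
  -- bound on the perturbation term
  have hid : t * (1 / (100 * t)) = 1 / 100 := by field_simp
  have hpert : |t * (z + 1) * (2 - z)| ≤ 4 / 100 := by
    have htabs : |t| = t := abs_of_pos ht0
    rcases hzd with h | h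
    · have h2 : |2 - z| ≤ 4 := by rw [abs_le]; constructor <;> linarith
      have hA : t * |z + 1| ≤ 1 / 100 := by
        have := mul_lt_mul_of_pos_left h ht0
        linarith [hid ▸ this]
      rw [abs_mul, abs_mul, htabs]
      nlinarith [abs_nonneg (2 - z), abs_nonneg (z + 1), mul_pos ht0 ht0]
    · have h2 : |z + 1| ≤ 4 := by rw [abs_le]; constructor <;> linarith
      have hA : t * |z - 2| ≤ 1 / 100 := by
        have := mul_lt_mul_of_pos_left h ht0
        linarith [hid ▸ this]
      have hzz : |2 - z| = |z - 2| := abs_sub_comm _ _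
      rw [abs_mul, abs_mul, htabs, hzz]
      nlinarith [abs_nonneg (z - 2), abs_nonneg (z + 1), mul_pos ht0 ht0]
  have him' := abs_le.mp him
  have hre' := abs_le.mp hre
  have hpert' := abs_le.mp hpert
  have hδpos : (0:ℝ) < 1 / (100 * t) := by positivity
  constructor
  · -- imaginary part
    have : (w ^ 2 + ((t * (z + 1) * (2 - z) : ℝ) : ℂ)).im = 2 * w.re * w.im := by
      simp [pow_two, Complex.add_im, Complex.mul_im]; ring
    rw [this, abs_le]
    constructor <;> nlinarith [abs_nonneg w.im, abs_nonneg w.re]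
  · -- real part
    have hrw : (w ^ 2 + ((t * (z + 1) * (2 - z) : ℝ) : ℂ)).re
        = w.re * w.re - w.im * w.im + t * (z + 1) * (2 - z) := by
      simp [pow_two, Complex.add_re, Complex.mul_re]
    have himδ := abs_le.mp (him.trans hδ1)
    rw [hrw, abs_le]
    constructor <;> nlinarith [sq_nonneg w.im, sq_nonneg w.re, himδ.1, himδ.2,
      hre'.1, hre'.2, hpert'.1, hpert'.2]
end

section
/- Consider g_t(z,w) = (z² − 2, w² + t(z+1)(2−z)). There exists t₀ > 0 such that for all real t ≥ t₀ there exists δ > 0 such that for every z ∈ [−2,2] with z ∉ {−1, 2}, and every w ∈ ℂ with |Im w| ≤ δ and |Re w| ≤ 1/3, the forward orbit {g_tⁿ(z,w) : n ∈ ℕ} is an unbounded subset of ℂ². -/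
/-!
Write `zₙ = base^[n] z` and let `wₙ` be the fibre coordinate, so `wₙ₊₁ = wₙ² + t·coeff zₙ` with
`coeff x = (x + 1)(2 - x)`. The zeros `-1, 2` of `coeff` are repelling fixed points of `base`,
so near them `|coeff zₙ|` grows by a factor `3/2` per step, and for `z ∉ {-1, 2}` there is a
first time `M` with `|coeff z_M| ≥ 3/20`. As long as the kicks `t·coeff zₙ` are below `1/4`,
`|wₙ| ≤ 1/2` and `|Im wₙ|` does not increase. Suppose the orbit stays below `t/10`. If the first
larger kick occurs at `M`, then `|w_{M+1}| ≥ 3t/20 - 1/4` already. Otherwise, between that kick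
and `M` only `O(log t)` steps pass, during which `|Im w|` grows by at most `t/5` per step; so
`|Im w| ≤ 1` at the time `j ∈ {M, M+1}` where `coeff z_j ≥ 3/20`, and
`Re w_{j+1} ≥ 3t/20 - 1 ≥ t/10`. Beyond `t/10` the square dominates the kicks and `|wₙ|` doubles.
-/

open Set Bornology

namespace QuadraticSkewProduct

def base (x : ℝ) : ℝ := x ^ 2 - 2

def coeff (x : ℝ) : ℝ := (x + 1) * (2 - x)

noncomputable def skew (t : ℝ) (q : ℂ × ℂ) : ℂ × ℂ :=
  (q.1 ^ 2 - 2, q.2 ^ 2 + (t : ℂ) * (q.1 + 1) * (2 - q.1))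

section Base

variable {x : ℝ}

lemma base_mapsTo : MapsTo base (Icc (-2) 2) (Icc (-2) 2) := fun x ⟨h₁, h₂⟩ => by
  constructor <;> unfold base <;> nlinarith

lemma coeff_base (x : ℝ) : coeff (base x) = coeff x * ((x - 1) * (x + 2)) := by
  unfold coeff base; ring

lemma abs_coeff_le_four (hx : x ∈ Icc (-2) 2) : |coeff x| ≤ 4 := by
  obtain ⟨h₁, h₂⟩ := hx
  unfold coeff
  rw [abs_le]
  constructor <;> nlinarith [sq_nonneg (x - 1 / 2)]

lemma near_fixed_of_abs_coeff_lt (hx : x ∈ Icc (-2) 2) (h : |coeff x| < 3 / 20) :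
    |x + 1| < 1 / 10 ∨ 2 - x < 1 / 10 := by
  obtain ⟨h₁, h₂⟩ := hx
  unfold coeff at h
  by_contra! hc
  obtain ⟨hc₁, hc₂⟩ := hc
  rcases le_or_gt 0 (x + 1) with hp | hn
  · rw [abs_of_nonneg hp] at hc₁
    rw [abs_of_nonneg (by nlinarith)] at h
    nlinarith [mul_nonneg (by linarith : (0:ℝ) ≤ x + 1 - 1 / 10) (by linarith : (0:ℝ) ≤ 2 - x)]
  · rw [abs_of_neg hn] at hc₁
    rw [abs_of_nonpos (by nlinarith)] at h
    nlinarith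

lemma three_halves_mul_abs_coeff_le (hx : x ∈ Icc (-2) 2) (h : |coeff x| < 3 / 20) :
    3 / 2 * |coeff x| ≤ |coeff (base x)| := by
  obtain ⟨h₁, h₂⟩ := hx
  have hfactor : 3 / 2 ≤ |(x - 1) * (x + 2)| := by
    rcases near_fixed_of_abs_coeff_lt ⟨h₁, h₂⟩ h with hb | hb
    · rw [abs_lt] at hb
      rw [abs_of_nonpos (by nlinarith)]
      nlinarith
    · rw [abs_of_nonneg (by nlinarith)]
      nlinarith
  rw [coeff_base, abs_mul, mul_comm]
  exact mul_le_mul_of_nonneg_left hfactor (abs_nonneg _)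

lemma pow_mul_abs_coeff_le (hx : x ∈ Icc (-2) 2) {k : ℕ}
    (h : ∀ j < k, |coeff (base^[j] x)| < 3 / 20) :
    (3 / 2) ^ k * |coeff x| ≤ |coeff (base^[k] x)| := by
  induction k with
  | zero => simp
  | succ k ih =>
    rw [Function.iterate_succ_apply', pow_succ, mul_comm _ (3 / 2), mul_assoc]
    calc 3 / 2 * ((3 / 2) ^ k * |coeff x|)
        ≤ 3 / 2 * |coeff (base^[k] x)| := by
          gcongr; exact ih fun j hj => h j (by omega)
      _ ≤ |coeff (base (base^[k] x))| :=
          three_halves_mul_abs_coeff_le (base_mapsTo.iterate k hx) (h k (by omega))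

lemma exists_le_abs_coeff (hx : x ∈ Icc (-2) 2) (hx₁ : x ≠ -1) (hx₂ : x ≠ 2) :
    ∃ n, 3 / 20 ≤ |coeff (base^[n] x)| := by
  by_contra! h
  have hpos : 0 < |coeff x| := by
    unfold coeff
    exact abs_pos.2 (mul_ne_zero (by contrapose! hx₁; linarith) (by contrapose! hx₂; linarith))
  obtain ⟨n, hn⟩ := pow_unbounded_of_one_lt (3 / 20 / |coeff x|) (by norm_num : (1:ℝ) < 3 / 2)
  rw [div_lt_iff₀ hpos] at hn
  linarith [pow_mul_abs_coeff_le (k := n) hx (fun j _ => h j), h n]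

/-- When `|coeff|` first becomes large it may be negative, but only just after leaving `-1`
from below, and then the next step of `base` lands where `coeff` is large and positive. -/
lemma le_coeff_base_or (hx : x ∈ Icc (-2) 2) (h : |coeff x| < 3 / 20)
    (h' : 3 / 20 ≤ |coeff (base x)|) :
    3 / 20 ≤ coeff (base x) ∨ 3 / 20 ≤ coeff (base (base x)) := by
  rcases le_or_gt 0 (coeff (base x)) with hp | hn
  · exact .inl (by rwa [abs_of_nonneg hp] at h')
  right
  rw [abs_of_neg hn] at h'
  obtain ⟨h₁, h₂⟩ := hx
  rcases near_fixed_of_abs_coeff_lt ⟨h₁, h₂⟩ h with hb | hb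
  · rw [abs_lt] at hb
    obtain ⟨hb₁, hb₂⟩ := hb
    set u := x ^ 2 - 1 with hu
    have hu₁ : -(19 / 100) < u := by nlinarith
    have hu₂ : u < 21 / 100 := by nlinarith
    have hq : coeff (base x) = u * (3 - u) := by unfold coeff base; ring
    have hneg : u * (3 - u) ≤ -(3 / 20) := by linarith
    have hule : u ≤ -(1 / 22) := by nlinarith
    have hqq : coeff (base (base x)) = u * (3 - u) * ((u - 2) * (u + 1)) := by
      unfold coeff base; ring
    have hfactor : 17 / 10 ≤ -((u - 2) * (u + 1)) := by nlinarith
    rw [hqq]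
    nlinarith
  · have hbx : 161 / 100 ≤ base x := by unfold base; nlinarith
    have hbx' : base x ≤ 2 := base_mapsTo ⟨h₁, h₂⟩ |>.2
    unfold coeff at hn
    nlinarith

lemma exists_le_coeff_iterate (hx : x ∈ Icc (-2) 2) {M : ℕ} (hM₀ : M ≠ 0)
    (hlt : ∀ n < M, |coeff (base^[n] x)| < 3 / 20) (hM : 3 / 20 ≤ |coeff (base^[M] x)|) :
    ∃ j, M ≤ j ∧ j ≤ M + 1 ∧ 3 / 20 ≤ coeff (base^[j] x) := by
  obtain ⟨m, rfl⟩ : ∃ m, M = m + 1 := ⟨M - 1, by omega⟩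
  rw [Function.iterate_succ_apply'] at hM
  rcases le_coeff_base_or (base_mapsTo.iterate m hx) (hlt m (by omega)) hM with h | h
  · exact ⟨m + 1, le_rfl, by omega, by rwa [Function.iterate_succ_apply']⟩
  · exact ⟨m + 2, by omega, le_rfl, by rwa [Function.iterate_succ_apply',
      Function.iterate_succ_apply']⟩

lemma lt_of_forall_le_abs_coeff_lt (hx : x ∈ Icc (-2) 2) {t : ℝ}
    (hx₀ : 1 / 4 < t * |coeff x|) {k L : ℕ} (hL : t < (3 / 2) ^ L)
    (h : ∀ j ≤ k, |coeff (base^[j] x)| < 3 / 20) : k < L := by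
  have ht : 0 < t := pos_of_mul_pos_left (hx₀.trans' (by norm_num)) (abs_nonneg _)
  have hchain := pow_mul_abs_coeff_le hx fun j hj => h j hj.le
  have hpow : (3 / 2 : ℝ) ^ k < (3 / 2) ^ L := by nlinarith [h k le_rfl]
  exact (pow_lt_pow_iff_right₀ (by norm_num)).1 hpow

end Base

section Fiber

lemma abs_norm_sq_add_ofReal_sub_le (a : ℂ) (c : ℝ) : |‖a ^ 2 + c‖ - ‖a‖ ^ 2| ≤ |c| := by
  have h := abs_norm_sub_norm_le (a ^ 2 + c) (a ^ 2)
  rwa [add_sub_cancel_left, norm_pow, Complex.norm_real, Real.norm_eq_abs] at h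

lemma abs_sub_norm_sq_le_norm_sq_add_ofReal (a : ℂ) (c : ℝ) : |c| - ‖a‖ ^ 2 ≤ ‖a ^ 2 + c‖ := by
  have h := norm_sub_norm_le (c : ℂ) (-(a ^ 2))
  rwa [sub_neg_eq_add, add_comm, norm_neg, norm_pow, Complex.norm_real, Real.norm_eq_abs] at h

lemma abs_im_sq_add_ofReal_le (a : ℂ) (c : ℝ) : |(a ^ 2 + c).im| ≤ 2 * ‖a‖ * |a.im| := by
  have him : (a ^ 2 + c).im = 2 * a.re * a.im := by simp [sq]; ring
  rw [him, abs_mul, abs_mul, abs_two]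
  gcongr
  exact Complex.abs_re_le_norm a

lemma sub_sq_im_le_norm_sq_add_ofReal (a : ℂ) (c : ℝ) : c - a.im ^ 2 ≤ ‖a ^ 2 + c‖ := by
  have hre : (a ^ 2 + c).re = a.re ^ 2 - a.im ^ 2 + c := by simp [sq]
  linarith [sq_nonneg a.re, (le_abs_self _).trans (Complex.abs_re_le_norm (a ^ 2 + c))]

variable {w : ℕ → ℂ} {c : ℕ → ℝ} (hw : ∀ n, w (n + 1) = w n ^ 2 + c n)
include hw

lemma two_pow_mul_le_norm {K R : ℝ} (hc : ∀ n, |c n| ≤ K) (hR : 2 ≤ R) (hK : K ≤ R * (R - 2))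
    {m : ℕ} (hm : R ≤ ‖w m‖) (k : ℕ) : 2 ^ k * R ≤ ‖w (m + k)‖ := by
  induction k with
  | zero => simpa using hm
  | succ k ih =>
    have hRk : R ≤ ‖w (m + k)‖ :=
      (le_mul_of_one_le_left (by linarith) (one_le_pow₀ one_le_two)).trans ih
    have hstep := abs_norm_sq_add_ofReal_sub_le (w (m + k)) (c (m + k))
    rw [← hw, abs_le] at hstep
    rw [pow_succ, ← add_assoc]
    nlinarith [hc (m + k)]

lemma not_isBounded_range_of_le_norm {K R : ℝ} (hc : ∀ n, |c n| ≤ K) (hR : 2 ≤ R)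
    (hK : K ≤ R * (R - 2)) {m : ℕ} (hm : R ≤ ‖w m‖) : ¬ IsBounded (range w) := by
  rintro hbdd
  obtain ⟨C, hC⟩ := isBounded_iff_forall_norm_le.1 hbdd
  obtain ⟨k, hk⟩ := pow_unbounded_of_one_lt (C / R) (by norm_num : (1:ℝ) < 2)
  rw [div_lt_iff₀ (by linarith)] at hk
  linarith [two_pow_mul_le_norm hw hc hR hK hm k, hC _ (mem_range_self (m + k))]

lemma norm_le_half_of_forall_abs_le (h₀ : ‖w 0‖ ≤ 1 / 2) {n : ℕ}
    (hc : ∀ k < n, |c k| ≤ 1 / 4) : ‖w n‖ ≤ 1 / 2 := by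
  induction n with
  | zero => exact h₀
  | succ n ih =>
    have hstep := abs_norm_sq_add_ofReal_sub_le (w n) (c n)
    rw [← hw, abs_le] at hstep
    nlinarith [ih fun k hk => hc k (by omega), hc n (by omega), norm_nonneg (w n)]

lemma abs_im_add_le_pow_mul {R : ℝ} {m n : ℕ} (hR : ∀ k < n, ‖w (m + k)‖ ≤ R) :
    |(w (m + n)).im| ≤ (2 * R) ^ n * |(w m).im| := by
  induction n with
  | zero => simp
  | succ n ih =>
    have hRn : ‖w (m + n)‖ ≤ R := hR n (by omega)
    rw [← add_assoc, hw, pow_succ]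
    calc |(w (m + n) ^ 2 + c (m + n)).im| ≤ 2 * ‖w (m + n)‖ * |(w (m + n)).im| :=
          abs_im_sq_add_ofReal_le _ _
      _ ≤ 2 * R * ((2 * R) ^ n * |(w m).im|) := by
          have := (norm_nonneg _).trans hRn
          gcongr
          exact ih fun k hk => hR k (by omega)
      _ = _ := by ring

lemma sub_one_le_norm_succ {j : ℕ} (hj : |(w j).im| ≤ 1) : c j - 1 ≤ ‖w (j + 1)‖ := by
  have h := sub_sq_im_le_norm_sq_add_ofReal (w j) (c j)
  rw [← hw] at h
  nlinarith [sq_abs (w j).im, abs_nonneg (w j).im]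

end Fiber

lemma fst_iterate_skew (t z : ℝ) (w : ℂ) (n : ℕ) :
    ((skew t)^[n] (z, w)).1 = (base^[n] z : ℝ) := by
  induction n with
  | zero => rfl
  | succ n ih =>
    rw [Function.iterate_succ_apply', Function.iterate_succ_apply', skew, ih, base]
    push_cast; ring

lemma snd_iterate_skew_succ (t z : ℝ) (w : ℂ) (n : ℕ) :
    ((skew t)^[n + 1] (z, w)).2 =
      ((skew t)^[n] (z, w)).2 ^ 2 + (t * coeff (base^[n] z) : ℝ) := by
  rw [Function.iterate_succ_apply', skew, fst_iterate_skew, coeff]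
  push_cast; ring

theorem exists_le_norm {t δ : ℝ} {L : ℕ} {z : ℝ} {w : ℕ → ℂ} (ht : 1000 ≤ t)
    (hL : t < (3 / 2) ^ L) (hδ : (t / 5) ^ (L + 1) * δ ≤ 1) (hz : z ∈ Icc (-2) 2)
    (hz₁ : z ≠ -1) (hz₂ : z ≠ 2)
    (hw : ∀ n, w (n + 1) = w n ^ 2 + (t * coeff (base^[n] z) : ℝ))
    (h₀ : ‖w 0‖ ≤ 1 / 2) (him : |(w 0).im| ≤ δ) : ∃ n, t / 10 ≤ ‖w n‖ := by
  by_contra! hno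
  have ht₀ : 0 < t := by linarith
  have hex := exists_le_abs_coeff hz hz₁ hz₂
  set M := Nat.find hex
  have hM : 3 / 20 ≤ |coeff (base^[M] z)| := Nat.find_spec hex
  have hMmin : ∀ n < M, |coeff (base^[n] z)| < 3 / 20 :=
    fun n hn => not_le.1 (Nat.find_min hex hn)
  have hkick : ∃ n, 1 / 4 < t * |coeff (base^[n] z)| := ⟨M, by nlinarith⟩
  set n₁ := Nat.find hkick
  have hn₁ : 1 / 4 < t * |coeff (base^[n₁] z)| := Nat.find_spec hkick
  have hn₁M : n₁ ≤ M := Nat.find_min' hkick (by nlinarith)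
  have hsmall : ∀ n ≤ n₁, ‖w n‖ ≤ 1 / 2 := fun n hn =>
    norm_le_half_of_forall_abs_le hw h₀ fun k hk => by
      rw [abs_mul, abs_of_pos ht₀]
      exact not_lt.1 (Nat.find_min hkick (by omega))
  rcases hn₁M.eq_or_lt with heq | hlt
  · have hstep := abs_sub_norm_sq_le_norm_sq_add_ofReal (w M) (t * coeff (base^[M] z))
    rw [← hw, abs_mul, abs_of_pos ht₀] at hstep
    nlinarith [hno (M + 1), hsmall M heq.ge, norm_nonneg (w M)]
  have hcount : M - n₁ - 1 < L := by
    refine lt_of_forall_le_abs_coeff_lt (base_mapsTo.iterate n₁ hz) hn₁ hL fun j hj => ?_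
    rw [← Function.iterate_add_apply]
    exact hMmin _ (by omega)
  have him₁ : |(w n₁).im| ≤ δ := by
    have h := abs_im_add_le_pow_mul hw (m := 0) (n := n₁) (R := 1 / 2)
      fun k hk => hsmall _ (by omega)
    norm_num at h
    exact h.trans him
  obtain ⟨j, hMj, hjM, hj⟩ := exists_le_coeff_iterate hz (by omega) hMmin hM
  have himj : |(w j).im| ≤ 1 := by
    have h := abs_im_add_le_pow_mul hw (m := n₁) (n := j - n₁) (R := t / 10)
      fun k _ => (hno _).le
    rw [Nat.add_sub_cancel' (by omega), show 2 * (t / 10) = t / 5 by ring] at h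
    calc |(w j).im| ≤ (t / 5) ^ (j - n₁) * δ := h.trans (by gcongr)
      _ ≤ (t / 5) ^ (L + 1) * δ := by
          gcongr
          · exact (abs_nonneg _).trans him
          · linarith
          · omega
      _ ≤ 1 := hδ
  nlinarith [hno (j + 1), sub_one_le_norm_succ hw himj]

lemma not_isBounded_range_iterate_skew {t z : ℝ} {w : ℂ} (ht : 420 ≤ t)
    (hz : z ∈ Icc (-2) 2) {m : ℕ} (hm : t / 10 ≤ ‖((skew t)^[m] (z, w)).2‖) :
    ¬ IsBounded (range fun n => (skew t)^[n] (z, w)) := fun hbdd => by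
  refine not_isBounded_range_of_le_norm (w := fun n => ((skew t)^[n] (z, w)).2)
    (snd_iterate_skew_succ t z w) (K := 4 * t) (fun n => ?_)
    (by linarith) (by nlinarith) hm ?_
  · rw [abs_mul, abs_of_pos (by linarith)]
    nlinarith [abs_coeff_le_four (base_mapsTo.iterate n hz)]
  · have h := LipschitzWith.prod_snd.isBounded_image hbdd
    rw [← range_comp] at h
    exact h

end QuadraticSkewProduct

open QuadraticSkewProduct

/-- For `g_t(z,w) = (z² − 2, w² + t(z+1)(2−z))` with `t` large: for every
`z ∈ [−2,2] \ {−1,2}`, the strip `U_δ = {|Im w| ≤ δ, |Re w| ≤ 1/3}` is disjoint from the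
fiberwise filled Julia set, i.e. all orbits starting there are unbounded. -/
theorem strip_disjoint_from_filled_julia :
    ∃ t₀ : ℝ, 0 < t₀ ∧ ∀ t : ℝ, t₀ ≤ t → ∃ δ : ℝ, 0 < δ ∧
      ∀ z : ℝ, z ∈ Set.Icc (-2 : ℝ) 2 → z ≠ -1 → z ≠ 2 →
        ∀ w : ℂ, |w.im| ≤ δ → |w.re| ≤ 1/3 →
          ¬ Bornology.IsBounded (Set.range fun n =>
            (fun q : ℂ × ℂ =>
              (q.1 ^ 2 - 2, q.2 ^ 2 + (t : ℂ) * (q.1 + 1) * (2 - q.1)))^[n]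
              ((z : ℂ), w)) := by
  refine ⟨1000, by norm_num, fun t ht => ?_⟩
  obtain ⟨L, hL⟩ := pow_unbounded_of_one_lt t (by norm_num : (1:ℝ) < 3 / 2)
  have hT : 6 ≤ (t / 5) ^ (L + 1) := by
    linarith [le_self_pow₀ (by linarith : (1:ℝ) ≤ t / 5) (n := L + 1) (by omega)]
  refine ⟨((t / 5) ^ (L + 1))⁻¹, by positivity, fun z hz hz₁ hz₂ w him hre => ?_⟩
  have hδ : ((t / 5) ^ (L + 1))⁻¹ ≤ 1 / 6 := by
    rw [inv_le_comm₀ (by linarith) (by norm_num)]; linarith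
  have h₀ : ‖w‖ ≤ 1 / 2 := by linarith [Complex.norm_le_abs_re_add_abs_im w]
  obtain ⟨m, hm⟩ := exists_le_norm (w := fun n => ((skew t)^[n] (z, w)).2) ht hL
    (by rw [mul_inv_cancel₀ (by linarith)]) hz hz₁ hz₂ (snd_iterate_skew_succ t z w) h₀ him
  exact not_isBounded_range_iterate_skew (by linarith) hz hm
end

section
/- Consider g_t(z,w) = (z² − 2, w² + t(z+1)(2−z)). There exists t₀ > 0 such that for all real t ≥ t₀: (i) (−1, 0) and (2, 0) are fixed points of g_t; and (ii) for every z ∈ [−2,2] with z ∉ {−1, 2}, the orbit g_tⁿ(z,0) escapes to infinity, i.e. ‖g_tⁿ(z,0)‖ → ∞ as n → ∞. -/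
/-!
Over `z ∈ [-2, 2]` the fibre coefficient `(z + 1)(2 - z)` is at least `-4`, so once
`|w| ≥ R := t / 100` the fibre map `w ↦ w² + t (z + 1)(2 - z)` at least doubles `|w|`
(as `R (R - 2) ≥ 4t`), and the orbit escapes. If instead `|wₙ| < R` for all `n`, then
`t (zₙ + 1)(2 - zₙ) ≤ w_{n+1} < t / 100`, so every `zₙ` stays `1/100`-close to the zero set
`{-1, 2}` of the coefficient. Both points are repelling fixed points of `z ↦ z² - 2`
(multipliers `-2` and `4`), so this forces `z ∈ {-1, 2}`, or `z = -2`, whose image is `2`;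
but for `z = -2` already `w₁ = -4t`.
-/

open Filter Function Set

namespace Jonsson

section CommRing

variable {R S : Type*} [CommRing R] [CommRing S]

def p (z : R) : R := z ^ 2 - 2

def g (t : R) (x : R × R) : R × R := (p x.1, x.2 ^ 2 + t * (x.1 + 1) * (2 - x.1))

theorem g_neg_one_zero (t : R) : g t (-1, 0) = (-1, 0) := by
  ext <;> simp only [g, p] <;> ring

theorem g_two_zero (t : R) : g t (2, 0) = (2, 0) := by
  ext <;> simp only [g, p] <;> ring

theorem fst_g_iterate (t : R) (x : R × R) (n : ℕ) : ((g t)^[n] x).1 = p^[n] x.1 :=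
  (Semiconj.iterate_right (f := Prod.fst) (fun _ => rfl) n) x

theorem snd_g_iterate_succ (t : R) (x : R × R) (n : ℕ) :
    ((g t)^[n + 1] x).2 = ((g t)^[n] x).2 ^ 2 + t * (p^[n] x.1 + 1) * (2 - p^[n] x.1) := by
  rw [iterate_succ_apply', ← fst_g_iterate]
  rfl

theorem map_g_iterate (φ : R →+* S) (t : R) (x : R × R) (n : ℕ) :
    Prod.map φ φ ((g t)^[n] x) = (g (φ t))^[n] (Prod.map φ φ x) :=
  Semiconj.iterate_right
    (fun _ => Prod.ext (by simp [g, p, map_ofNat]) (by simp [g, map_ofNat])) n x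

end CommRing

theorem eq_zero_of_bounded_of_expanding {u : ℕ → ℝ} {c δ : ℝ} (hc : 1 < c)
    (hbdd : ∀ n, |u n| ≤ δ) (hexp : ∀ n, c * |u n| ≤ |u (n + 1)|) : u 0 = 0 := by
  by_contra h
  obtain ⟨n, hn⟩ :=
    ((tendsto_atTop_of_geom_le (abs_pos.2 h) hc hexp).eventually_gt_atTop δ).exists
  exact (hbdd n).not_gt hn

theorem mapsTo_p_Icc : MapsTo p (Icc (-2 : ℝ) 2) (Icc (-2) 2) := fun x ⟨h₁, h₂⟩ =>
  ⟨by unfold p; nlinarith, by unfold p; nlinarith⟩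

theorem eq_two_of_forall_iterate_near_two {x ε : ℝ} (hx : x ∈ Icc (-2) 2) (hε : ε ≤ 1)
    (h : ∀ n, 2 - ε ≤ p^[n] x) : x = 2 := by
  have hmem n := (mapsTo_p_Icc.iterate n) hx
  have key := eq_zero_of_bounded_of_expanding (u := fun n => 2 - p^[n] x) (c := 3) (δ := ε)
    (by norm_num) (fun n => abs_le.2 ⟨by linarith [h n, (hmem n).2], by linarith [h n]⟩)
    (fun n => by
      have h2 : 2 - p (p^[n] x) = (2 - p^[n] x) * (2 + p^[n] x) := by unfold p; ring
      rw [iterate_succ_apply', h2, abs_mul,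
        abs_of_nonneg (a := 2 + p^[n] x) (by linarith [h n]), mul_comm]
      gcongr
      linarith [h n])
  simp only [iterate_zero_apply] at key
  linarith

theorem eq_neg_one_of_forall_iterate_near_neg_one {x ε : ℝ} (hε : ε ≤ 1 / 2)
    (h : ∀ n, |p^[n] x + 1| ≤ ε) : x = -1 := by
  have key := eq_zero_of_bounded_of_expanding (u := fun n => p^[n] x + 1) (c := 3 / 2) (δ := ε)
    (by norm_num) h
    (fun n => by
      have h2 : p (p^[n] x) + 1 = (p^[n] x + 1) * (p^[n] x - 1) := by unfold p; ring
      have hle : p^[n] x ≤ -1 / 2 := by linarith [(abs_le.1 (h n)).2]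
      rw [iterate_succ_apply', h2, abs_mul, abs_of_neg (a := p^[n] x - 1) (by linarith),
        mul_comm]
      gcongr
      linarith)
  simp only [iterate_zero_apply] at key
  linarith

theorem le_or_le_of_mul_le {x ε : ℝ} (hε₀ : 0 ≤ ε) (h : (x + 1) * (2 - x) ≤ ε) :
    x ≤ -1 + ε ∨ 2 - ε ≤ x := by
  by_contra! hmid
  rcases le_total x (1 / 2) with hx | hx <;> nlinarith

theorem le_or_abs_add_one_le_or_le_of_mul_le {x ε : ℝ} (hε₀ : 0 ≤ ε) (hε : ε ≤ 1 / 100)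
    (h₀ : (x + 1) * (2 - x) ≤ ε) (h₁ : (p x + 1) * (2 - p x) ≤ ε) :
    x ≤ -2 + ε ∨ |x + 1| ≤ ε ∨ 2 - ε ≤ x := by
  rcases le_or_le_of_mul_le hε₀ h₀ with hl | hr
  · rcases le_or_le_of_mul_le hε₀ h₁ with hpl | hpr
    · unfold p at hpl
      exact Or.inr (Or.inl (abs_le.2 ⟨by nlinarith, by linarith⟩))
    · unfold p at hpr
      exact Or.inl (by nlinarith)
  · exact Or.inr (Or.inr hr)

theorem eq_neg_two_or_neg_one_or_two_of_forall_iterate_mul_le {x ε : ℝ} (hx : x ∈ Icc (-2) 2)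
    (hε₀ : 0 ≤ ε) (hε : ε ≤ 1 / 100) (h : ∀ n, (p^[n] x + 1) * (2 - p^[n] x) ≤ ε) :
    x = -2 ∨ x = -1 ∨ x = 2 := by
  have hmem n : p^[n] x ∈ Icc (-2) 2 := mapsTo_p_Icc.iterate n hx
  have hnear n : p^[n] x ≤ -2 + ε ∨ |p^[n] x + 1| ≤ ε ∨ 2 - ε ≤ p^[n] x :=
    le_or_abs_add_one_le_or_le_of_mul_le hε₀ hε (h n) <| by
      simpa only [iterate_succ_apply'] using h (n + 1)
  have hsucc n : p^[n + 1] x = (p^[n] x) ^ 2 - 2 := iterate_succ_apply' p n x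
  have two_stays n (hn : 2 - ε ≤ p^[n] x) : 2 - ε ≤ p^[n + 1] x := by
    have : 2 - 4 * ε ≤ p^[n + 1] x := by rw [hsucc]; nlinarith
    rcases hnear (n + 1) with h' | h' | h'
    · linarith
    · linarith [(abs_le.1 h').2]
    · exact h'
  have neg_one_stays n (hn : |p^[n] x + 1| ≤ ε) : |p^[n + 1] x + 1| ≤ ε := by
    obtain ⟨hn₁, hn₂⟩ := abs_le.1 hn
    have : |p^[n + 1] x + 1| ≤ 3 * ε := by
      rw [hsucc, show (p^[n] x) ^ 2 - 2 + 1 = (p^[n] x + 1) * (p^[n] x - 1) by ring, abs_mul,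
        abs_of_neg (a := p^[n] x - 1) (by linarith)]
      nlinarith
    rcases hnear (n + 1) with h' | h' | h'
    · linarith [(abs_le.1 this).1]
    · exact h'
    · linarith [(abs_le.1 this).2]
  have eq_two_of_near m (hm : 2 - ε ≤ p^[m] x) : p^[m] x = 2 := by
    refine eq_two_of_forall_iterate_near_two (ε := ε) (hmem m) (by linarith) fun n => ?_
    rw [← iterate_add_apply]
    induction n with
    | zero => simpa using hm
    | succ n ih => rw [add_right_comm]; exact two_stays _ ih
  rcases hnear 0 with h₀ | h₀ | h₀
  · have hx₀ : x ≤ -2 + ε := h₀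
    have h₁ : p^[1] x = x ^ 2 - 2 := hsucc 0
    have hx₁ : 2 - ε ≤ p^[1] x := by
      rcases hnear 1 with h' | h' | h'
      · nlinarith [hx.1]
      · nlinarith [(abs_le.1 h').2, hx.1]
      · exact h'
    have := eq_two_of_near 1 hx₁
    left
    nlinarith [hx.1]
  · refine Or.inr (Or.inl ?_)
    refine eq_neg_one_of_forall_iterate_near_neg_one (ε := ε) (by linarith) fun n => ?_
    induction n with
    | zero => exact h₀
    | succ n ih => exact neg_one_stays n ih
  · exact Or.inr (Or.inr (eq_two_of_near 0 h₀))

theorem tendsto_abs_atTop_of_sq_sub_le {w : ℕ → ℝ} {a R : ℝ} (hR : 2 ≤ R)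
    (ha : a ≤ R * (R - 2)) (h₀ : R ≤ |w 0|) (hstep : ∀ n, w n ^ 2 - a ≤ |w (n + 1)|) :
    Tendsto (fun n => |w n|) atTop atTop := by
  have double n (hn : R ≤ |w n|) : 2 * |w n| ≤ |w (n + 1)| := by
    have := hstep n
    rw [← sq_abs] at this
    nlinarith
  have large n : R ≤ |w n| := by
    induction n with
    | zero => exact h₀
    | succ n ih => linarith [double n ih]
  exact tendsto_atTop_of_geom_le (by linarith [large 0]) one_lt_two fun n => double n (large n)

theorem tendsto_abs_snd_g_iterate {t z : ℝ} (ht : 50000 ≤ t) (hz : z ∈ Icc (-2) 2)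
    (hz₁ : z ≠ -1) (hz₂ : z ≠ 2) :
    Tendsto (fun n => |((g t)^[n] (z, 0)).2|) atTop atTop := by
  set W := fun n => ((g t)^[n] (z, 0)).2 with hW
  have hrec n : W (n + 1) = W n ^ 2 + t * (p^[n] z + 1) * (2 - p^[n] z) :=
    snd_g_iterate_succ t (z, 0) n
  have hlow n : W n ^ 2 - 4 * t ≤ |W (n + 1)| := by
    obtain ⟨h₁, h₂⟩ := mapsTo_p_Icc.iterate n hz
    have hq : -4 ≤ (p^[n] z + 1) * (2 - p^[n] z) := by nlinarith
    calc W n ^ 2 - 4 * t ≤ W (n + 1) := by rw [hrec n, mul_assoc]; nlinarith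
      _ ≤ |W (n + 1)| := le_abs_self _
  obtain ⟨N, hN⟩ : ∃ N, t / 100 ≤ |W N| := by
    by_contra! hsmall
    have hq n : (p^[n] z + 1) * (2 - p^[n] z) ≤ 1 / 100 := by
      have : t * ((p^[n] z + 1) * (2 - p^[n] z)) ≤ t * (1 / 100) := by
        nlinarith [hrec n, le_abs_self (W (n + 1)), hsmall (n + 1), sq_nonneg (W n)]
      exact le_of_mul_le_mul_left this (by linarith)
    rcases eq_neg_two_or_neg_one_or_two_of_forall_iterate_mul_le hz (by norm_num) le_rfl hq
      with rfl | rfl | rfl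
    · have hW₁ : W 1 = -4 * t := by norm_num [hW, g, mul_comm]
      have := hsmall 1
      rw [hW₁, abs_of_neg (by linarith)] at this
      linarith
    · exact hz₁ rfl
    · exact hz₂ rfl
  rw [← tendsto_add_atTop_iff_nat N]
  refine tendsto_abs_atTop_of_sq_sub_le (w := fun n => W (n + N)) (a := 4 * t) (R := t / 100)
    (by linarith) (by nlinarith) (by simpa using hN) fun n => ?_
  simpa [add_right_comm] using hlow (n + N)

end Jonsson

/-- For `g_t(z,w) = (z² − 2, w² + t(z+1)(2−z))` with `t` large: `(−1,0)` and `(2,0)` are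
fixed points, and for every other `z ∈ [−2,2]` the critical point `(z,0)` escapes to
infinity. -/
theorem jonsson_example_critical_orbits :
    ∃ t₀ : ℝ, 0 < t₀ ∧ ∀ t : ℝ, t₀ ≤ t →
      ((fun q : ℂ × ℂ =>
          (q.1 ^ 2 - 2, q.2 ^ 2 + (t : ℂ) * (q.1 + 1) * (2 - q.1))) (-1, 0) = (-1, 0)) ∧
      ((fun q : ℂ × ℂ =>
          (q.1 ^ 2 - 2, q.2 ^ 2 + (t : ℂ) * (q.1 + 1) * (2 - q.1))) (2, 0) = (2, 0)) ∧
      ∀ z : ℝ, z ∈ Set.Icc (-2 : ℝ) 2 → z ≠ -1 → z ≠ 2 →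
        Filter.Tendsto (fun n =>
          ‖(fun q : ℂ × ℂ =>
              (q.1 ^ 2 - 2, q.2 ^ 2 + (t : ℂ) * (q.1 + 1) * (2 - q.1)))^[n]
              ((z : ℂ), 0)‖) Filter.atTop Filter.atTop := by
  refine ⟨50000, by norm_num, fun t ht =>
    ⟨Jonsson.g_neg_one_zero (t : ℂ), Jonsson.g_two_zero (t : ℂ), fun z hz hz₁ hz₂ => ?_⟩⟩
  refine tendsto_atTop_mono (fun n => ?_) (Jonsson.tendsto_abs_snd_g_iterate ht hz hz₁ hz₂)
  have hcast := Jonsson.map_g_iterate Complex.ofRealHom t (z, 0) n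
  change _ ≤ ‖(Jonsson.g (t : ℂ))^[n] ((z : ℂ), 0)‖
  calc |((Jonsson.g t)^[n] (z, 0)).2|
      = ‖(Prod.map Complex.ofRealHom Complex.ofRealHom ((Jonsson.g t)^[n] (z, 0))).2‖ := by
        simp
    _ ≤ ‖(Jonsson.g (t : ℂ))^[n] ((z : ℂ), 0)‖ := by
        rw [hcast]
        exact norm_snd_le _
end

section
/- Let p : ℂ → ℂ be a polynomial, J ⊆ ℂ a nonempty compact set with p(J) ⊆ J, and (a,b,c) ∈ ℂ³ with (a,b,c) ≠ (0,0,0) and a y² + b y + c ≠ 0 for every y ∈ J. For T ∈ ℂ, let F_T(z,w) = (p(z), w² + T(a z² + b z + c)). Then there exists T₀ > 0 such that for all T with |T| ≥ T₀ there exists a real R with R < inf_{y ∈ J} |T(a y² + b y + c)| such that for every z ∈ J and every w ∈ ℂ: if the forward orbit of (z,w) under F_T is bounded in ℂ², then |w| ≤ R; moreover one may take R = 2√( sup_{y ∈ J} |T(a y² + b y + c)| ). -/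
/-!
Over a point `z` of the invariant set `J` the fibre map is `w ↦ w² + q(z)` with `‖q(z)‖ ≤ S`,
where `S = sup_J |Tρ|`. Once `‖w‖ > 2√S` and `S ≥ 4`, we get `‖w² + q(z)‖ ≥ ‖w‖² - ‖w‖²/4 ≥ 2‖w‖`,
so the fibre coordinate doubles at each step and the orbit is unbounded. Since
`sup_J |Tρ| = ‖T‖ · sup_J |ρ|` and `inf_J |Tρ| = ‖T‖ · inf_J |ρ|` with `inf_J |ρ| > 0`, the radius
`2√(‖T‖ sup_J |ρ|)` grows like `√‖T‖` and falls below `‖T‖ inf_J |ρ|` for `‖T‖` large.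
-/

open Bornology Function Set Pointwise

section QuadraticSkewProduct

variable {X 𝕜 : Type*} [NormedDivisionRing 𝕜]

def quadSkewProduct (g : X → X) (q : X → 𝕜) (x : X × 𝕜) : X × 𝕜 :=
  (g x.1, x.2 ^ 2 + q x.1)

lemma quadSkewProduct_iterate_fst (g : X → X) (q : X → 𝕜) (n : ℕ) (x : X × 𝕜) :
    ((quadSkewProduct g q)^[n] x).1 = g^[n] x.1 := by
  induction n generalizing x with
  | zero => rfl
  | succ n ih => rw [iterate_succ_apply, iterate_succ_apply, ih]; rfl

lemma two_mul_norm_le_norm_sq_add {w c : 𝕜} {S : ℝ} (hS : 4 ≤ S) (hc : ‖c‖ ≤ S)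
    (hw : 2 * √S < ‖w‖) : 2 * ‖w‖ ≤ ‖w ^ 2 + c‖ := by
  have hsqrt : 2 ≤ √S := Real.le_sqrt_of_sq_le (by linarith)
  have hwS : 4 * S < ‖w‖ ^ 2 := by
    calc 4 * S = (2 * √S) ^ 2 := by rw [mul_pow, Real.sq_sqrt (by linarith)]; norm_num
      _ < ‖w‖ ^ 2 := by gcongr
  have hreverse := norm_sub_norm_le (w ^ 2) (-c)
  rw [norm_pow, norm_neg, sub_neg_eq_add] at hreverse
  nlinarith

lemma image_norm_mul_eq_smul (T : 𝕜) (f : X → 𝕜) (J : Set X) :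
    (fun y => ‖T * f y‖) '' J = ‖T‖ • ((fun y => ‖f y‖) '' J) := by
  simp_rw [norm_mul, ← image_smul, image_image, smul_eq_mul]

variable {g : X → X} {q : X → 𝕜} {J : Set X} {S : ℝ}

lemma two_pow_mul_le_norm_snd_iterate (hJ : MapsTo g J J) (hS : 4 ≤ S)
    (hq : ∀ z ∈ J, ‖q z‖ ≤ S) {z : X} (hz : z ∈ J) {w : 𝕜} (hw : 2 * √S < ‖w‖) (n : ℕ) :
    2 ^ n * ‖w‖ ≤ ‖((quadSkewProduct g q)^[n] (z, w)).2‖ := by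
  induction n with
  | zero => simp
  | succ n ih =>
    have hzn : ((quadSkewProduct g q)^[n] (z, w)).1 ∈ J := by
      rw [quadSkewProduct_iterate_fst]
      exact hJ.iterate n hz
    have hwn : 2 * √S < ‖((quadSkewProduct g q)^[n] (z, w)).2‖ := by
      have : ‖w‖ ≤ 2 ^ n * ‖w‖ := le_mul_of_one_le_left (norm_nonneg w) (one_le_pow₀ one_le_two)
      linarith
    rw [iterate_succ_apply', pow_succ', mul_assoc]
    exact (mul_le_mul_of_nonneg_left ih two_pos.le).trans
      (two_mul_norm_le_norm_sq_add hS (hq _ hzn) hwn)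

lemma not_isBounded_range_of_two_pow_mul_le {E : Type*} [SeminormedAddCommGroup E] {u : ℕ → E}
    {r : ℝ} (hr : 0 < r) (hu : ∀ n, 2 ^ n * r ≤ ‖u n‖) : ¬IsBounded (range u) := by
  rintro hbdd
  obtain ⟨C, hC⟩ := hbdd.exists_norm_le
  obtain ⟨n, hn⟩ := pow_unbounded_of_one_lt (C / r) one_lt_two
  rw [div_lt_iff₀ hr] at hn
  linarith [hu n, hC (u n) ⟨n, rfl⟩]

lemma norm_le_of_isBounded_orbit [Bornology X] (hJ : MapsTo g J J) (hS : 4 ≤ S)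
    (hq : ∀ z ∈ J, ‖q z‖ ≤ S) {z : X} (hz : z ∈ J) {w : 𝕜}
    (hbdd : IsBounded (range fun n => (quadSkewProduct g q)^[n] (z, w))) :
    ‖w‖ ≤ 2 * √S := by
  by_contra! hw
  have hw0 : 0 < ‖w‖ := (by positivity : (0 : ℝ) ≤ 2 * √S).trans_lt hw
  refine not_isBounded_range_of_two_pow_mul_le hw0
    (two_pow_mul_le_norm_snd_iterate hJ hS hq hz hw) ?_
  rw [range_comp' Prod.snd]
  exact hbdd.image_snd

end QuadraticSkewProduct

theorem filled_julia_in_small_disk_general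
    (p : Polynomial ℂ) (J : Set ℂ) (hJne : J.Nonempty) (hJc : IsCompact J)
    (hJinv : ∀ z ∈ J, p.eval z ∈ J)
    (a b c : ℂ)
    (hroots : ∀ y ∈ J, a * y ^ 2 + b * y + c ≠ 0) :
    ∃ T₀ : ℝ, 0 < T₀ ∧ ∀ T : ℂ, T₀ ≤ ‖T‖ →
      ∃ R : ℝ,
        R < sInf ((fun y => ‖T * (a * y ^ 2 + b * y + c)‖) '' J) ∧
        (∀ z ∈ J, ∀ w : ℂ,
          Bornology.IsBounded (Set.range fun n =>
            (fun q : ℂ × ℂ =>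
              (p.eval q.1, q.2 ^ 2 + T * (a * q.1 ^ 2 + b * q.1 + c)))^[n] (z, w)) →
          ‖w‖ ≤ R) ∧
        R = 2 * Real.sqrt (sSup ((fun y => ‖T * (a * y ^ 2 + b * y + c)‖) '' J)) := by
  set K := (fun y => ‖a * y ^ 2 + b * y + c‖) '' J
  have hK : IsCompact K := hJc.image (by fun_prop)
  obtain ⟨y, hy, hym⟩ := hK.sInf_mem (hJne.image _)
  have hm : 0 < sInf K := hym ▸ norm_pos_iff.2 (hroots y hy)
  have hmM : sInf K ≤ sSup K := csInf_le_csSup (hJne.image _) hK.bddBelow hK.bddAbove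
  have hM : 0 < sSup K := hm.trans_le hmM
  refine ⟨4 * sSup K / sInf K ^ 2 + 1, by positivity, fun T hT => ?_⟩
  have hTK : 4 * sSup K < ‖T‖ * sInf K ^ 2 := by
    rw [← div_lt_iff₀ (by positivity)]; linarith
  have hT0 : 0 < ‖T‖ := lt_of_lt_of_le (by positivity) hT
  have hS : 4 ≤ ‖T‖ * sSup K := by nlinarith
  rw [image_norm_mul_eq_smul, Real.sSup_smul_of_nonneg (norm_nonneg T),
    Real.sInf_smul_of_nonneg (norm_nonneg T), smul_eq_mul, smul_eq_mul]
  refine ⟨2 * √(‖T‖ * sSup K), ?_, fun z hz w hbdd => ?_, rfl⟩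
  · have : √(‖T‖ * sSup K) < ‖T‖ * sInf K / 2 :=
      (Real.sqrt_lt' (by positivity)).2 (by nlinarith)
    linarith
  · refine norm_le_of_isBounded_orbit (g := p.eval)
      (q := fun y => T * (a * y ^ 2 + b * y + c)) hJinv hS (fun y hy => ?_) hz hbdd
    rw [norm_mul]
    exact mul_le_mul_of_nonneg_left (le_csSup hK.bddAbove (mem_image_of_mem _ hy)) (norm_nonneg T)

/-- For `F_T(z,w) = (p(z), w² + T(a z² + b z + c))` with `a X² + b X + c` nonvanishing
on a compact `p`-invariant set `J`: for `|T|` large there is an escape radius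
`R = 2√(sup_{y∈J} |T(a y² + b y + c)|)` with `R < inf_{y∈J} |T(a y² + b y + c)|`, such
that every point `(z,w)` over `J` with bounded orbit satisfies `|w| ≤ R`. -/
theorem filled_julia_in_small_disk
    (p : Polynomial ℂ) (J : Set ℂ) (hJne : J.Nonempty) (hJc : IsCompact J)
    (hJinv : ∀ z ∈ J, p.eval z ∈ J)
    (a b c : ℂ) (habc : (a, b, c) ≠ (0, 0, 0))
    (hroots : ∀ y ∈ J, a * y ^ 2 + b * y + c ≠ 0) :
    ∃ T₀ : ℝ, 0 < T₀ ∧ ∀ T : ℂ, T₀ ≤ ‖T‖ →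
      ∃ R : ℝ,
        R < sInf ((fun y => ‖T * (a * y ^ 2 + b * y + c)‖) '' J) ∧
        (∀ z ∈ J, ∀ w : ℂ,
          Bornology.IsBounded (Set.range fun n =>
            (fun q : ℂ × ℂ =>
              (p.eval q.1, q.2 ^ 2 + T * (a * q.1 ^ 2 + b * q.1 + c)))^[n] (z, w)) →
          ‖w‖ ≤ R) ∧
        R = 2 * Real.sqrt (sSup ((fun y => ‖T * (a * y ^ 2 + b * y + c)‖) '' J)) :=
  filled_julia_in_small_disk_general p J hJne hJc hJinv a b c hroots
end

section
/- Let p : ℂ → ℂ be a polynomial, J ⊆ ℂ a nonempty compact set with p(J) ⊆ J, and (a,b,c) ∈ ℂ³ with (a,b,c) ≠ (0,0,0) and a y² + b y + c ≠ 0 for every y ∈ J. Then there exists T₀ > 0 such that for all T ∈ ℂ with |T| ≥ T₀, for every z ∈ J and every w ∈ ℂ: if |w² + T(a z² + b z + c)| < inf_{y ∈ J} |T(a y² + b y + c)|, then |w| < inf_{y ∈ J} |T(a y² + b y + c)|. -/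
/-!
Write `q y = a y² + b y + c`. By compactness `|q|` attains on `J` a minimum `m > 0` and a
maximum `M`, and `r(F_T) = |T| m`. If `|w² + T q(z)| < |T| m`, then
`|w|² < |T| m + |T| M`, which is at most `(|T| m)²` as soon as `|T| ≥ (m + M) / m²`.
-/

lemma norm_lt_of_norm_sq_add_lt {𝕜 : Type*} [NormedDivisionRing 𝕜] {w v : 𝕜} {ρ : ℝ}
    (hρ : 0 ≤ ρ) (h : ‖w ^ 2 + v‖ < ρ) (hv : ρ + ‖v‖ ≤ ρ ^ 2) : ‖w‖ < ρ := by
  have hsq : ‖w‖ ^ 2 < ρ ^ 2 :=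
    calc ‖w‖ ^ 2 = ‖w ^ 2 + v - v‖ := by rw [add_sub_cancel_right, norm_pow]
      _ ≤ ‖w ^ 2 + v‖ + ‖v‖ := norm_sub_le _ _
      _ < ρ + ‖v‖ := by gcongr
      _ ≤ ρ ^ 2 := hv
  exact lt_of_pow_lt_pow_left₀ 2 hρ hsq

lemma sInf_image_norm_mul {α 𝕜 : Type*} [NormedDivisionRing 𝕜] (T : 𝕜) (g : α → 𝕜)
    (s : Set α) :
    sInf ((fun y => ‖T * g y‖) '' s) = ‖T‖ * sInf ((fun y => ‖g y‖) '' s) := by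
  simp_rw [norm_mul]
  rw [← smul_eq_mul, ← Real.sInf_smul_of_nonneg (norm_nonneg T), ← Set.image_smul,
    Set.image_image]
  rfl

lemma IsCompact.sInf_image_norm_pos {X E : Type*} [TopologicalSpace X] [NormedAddCommGroup E]
    {K : Set X} (hK : IsCompact K) (hne : K.Nonempty) {g : X → E} (hg : ContinuousOn g K)
    (hg0 : ∀ x ∈ K, g x ≠ 0) : 0 < sInf ((fun x => ‖g x‖) '' K) := by
  obtain ⟨x, hx, hmin⟩ := (hK.image_of_continuousOn hg.norm).sInf_mem (hne.image _)
  rw [← hmin]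
  exact norm_pos_iff.mpr (hg0 x hx)

theorem admissible_preimage_general
    (J : Set ℂ) (hJne : J.Nonempty) (hJc : IsCompact J)
    (a b c : ℂ)
    (hroots : ∀ y ∈ J, a * y ^ 2 + b * y + c ≠ 0) :
    ∃ T₀ : ℝ, 0 < T₀ ∧ ∀ T : ℂ, T₀ ≤ ‖T‖ →
      ∀ z ∈ J, ∀ w : ℂ,
        ‖w ^ 2 + T * (a * z ^ 2 + b * z + c)‖ <
            sInf ((fun y => ‖T * (a * y ^ 2 + b * y + c)‖) '' J) →
        ‖w‖ <
            sInf ((fun y => ‖T * (a * y ^ 2 + b * y + c)‖) '' J) := by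
  have hq : Continuous fun y : ℂ => a * y ^ 2 + b * y + c := by fun_prop
  set m := sInf ((fun y => ‖a * y ^ 2 + b * y + c‖) '' J)
  have hm : 0 < m := hJc.sInf_image_norm_pos hJne hq.continuousOn hroots
  obtain ⟨y₁, -, hmax⟩ := hJc.exists_isMaxOn hJne hq.norm.continuousOn
  set M := ‖a * y₁ ^ 2 + b * y₁ + c‖
  refine ⟨(m + M) / m ^ 2, by positivity, fun T hT z hz w hw => ?_⟩
  simp only [sInf_image_norm_mul] at hw ⊢
  refine norm_lt_of_norm_sq_add_lt (by positivity) hw ?_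
  rw [div_le_iff₀ (by positivity)] at hT
  calc ‖T‖ * m + ‖T * (a * z ^ 2 + b * z + c)‖ ≤ ‖T‖ * m + ‖T‖ * M := by
        rw [norm_mul]; gcongr; exact hmax hz
    _ = ‖T‖ * (m + M) := by ring
    _ ≤ ‖T‖ * (‖T‖ * m ^ 2) := by gcongr
    _ = (‖T‖ * m) ^ 2 := by ring

/-- Admissibility is preserved under pullback: for `F_T(z,w) = (p(z), w² + T(a z² + b z + c))`
with `a X² + b X + c` nonvanishing on a compact `p`-invariant set `J`, for `|T|` large,
if the image of `w` in the fiber over `z ∈ J` has modulus less than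
`r(F_T) = inf_{y∈J} |T(a y² + b y + c)|`, then so does `w` itself. -/
theorem admissible_preimage
    (p : Polynomial ℂ) (J : Set ℂ) (hJne : J.Nonempty) (hJc : IsCompact J)
    (hJinv : ∀ z ∈ J, p.eval z ∈ J)
    (a b c : ℂ) (habc : (a, b, c) ≠ (0, 0, 0))
    (hroots : ∀ y ∈ J, a * y ^ 2 + b * y + c ≠ 0) :
    ∃ T₀ : ℝ, 0 < T₀ ∧ ∀ T : ℂ, T₀ ≤ ‖T‖ →
      ∀ z ∈ J, ∀ w : ℂ,
        ‖w ^ 2 + T * (a * z ^ 2 + b * z + c)‖ <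
            sInf ((fun y => ‖T * (a * y ^ 2 + b * y + c)‖) '' J) →
        ‖w‖ <
            sInf ((fun y => ‖T * (a * y ^ 2 + b * y + c)‖) '' J) :=
  admissible_preimage_general J hJne hJc a b c hroots
end
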